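/- arXiv:2207.02058 — 11 statements merged into one kernel-verified Lean document; each statement's English description precedes it below -/
import Mathlib

section
/- For all real parameters λ₀, λ₁, λ₂ > 0 and every τ ∈ ℝ, the infimum over u ∈ ℝ of the function h(u) = τ·u + λ₀·𝟙{u ≠ 0} + λ₁·|u| + λ₂·u² equals Φ(τ); that is, inf_{u ∈ ℝ} ( τu + λ₀·𝟙{u≠0} + λ₁|u| + λ₂u² ) = λ₀ − (|τ| − λ₁)²/(4λ₂) if |τ| > 2√(λ₀λ₂) + λ₁, and equals 0 if |τ| ≤ 2√(λ₀λ₂) + λ₁. -/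
/-!
For `u ≠ 0` the worst case of `τ * u` is `-|τ| * |u|`, so on `ℝ \ {0}` the objective reduces to the
one-variable quadratic `l0 + l2 * t ^ 2 - (|τ| - l1) * t` in `t = |u| > 0`, attained by choosing the
sign of `u` opposite to that of `τ`. Its minimum `l0 - (|τ| - l1) ^ 2 / (4 * l2)` sits at the vertex
`t = (|τ| - l1) / (2 * l2)`, which is admissible exactly when `|τ| > l1`, and it beats the value `0`
at `u = 0` exactly when `|τ| - l1 > 2 * √(l0 * l2)`.
-/

open scoped Classical

namespace L0L1L2Penalty

noncomputable def objective (l0 l1 l2 τ u : ℝ) : ℝ :=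
  τ * u + l0 * (if u ≠ 0 then (1 : ℝ) else 0) + l1 * |u| + l2 * u ^ 2

variable {l0 l1 l2 τ : ℝ}

@[simp]
lemma objective_zero : objective l0 l1 l2 τ 0 = 0 := by
  simp [objective]

lemma reduced_le_objective {u : ℝ} (hu : u ≠ 0) :
    l0 + l2 * |u| ^ 2 - (|τ| - l1) * |u| ≤ objective l0 l1 l2 τ u := by
  have hτu : -(|τ| * |u|) ≤ τ * u := by simpa only [abs_mul] using neg_abs_le (τ * u)
  simp only [objective, hu, ne_eq, not_false_eq_true, if_true, mul_one, sq_abs]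
  linarith

lemma objective_neg_sign_mul {t : ℝ} (ht : 0 < t) :
    objective l0 l1 l2 τ (if 0 ≤ τ then -t else t) = l0 + l2 * t ^ 2 - (|τ| - l1) * t := by
  split_ifs with hτ
  · simp [objective, ht.ne', abs_of_nonneg hτ, abs_of_pos ht]
    ring
  · simp [objective, ht.ne', abs_of_neg (not_le.mp hτ), abs_of_pos ht]
    ring

lemma neg_sq_div_le_quadratic (hl2 : 0 < l2) (a t : ℝ) :
    -(a ^ 2 / (4 * l2)) ≤ l2 * t ^ 2 - a * t := by
  have key : 4 * l2 * (l2 * t ^ 2 - a * t) + a ^ 2 = (2 * l2 * t - a) ^ 2 := by ring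
  rw [neg_le_iff_add_nonneg', div_add' _ _ _ (by positivity)]
  exact div_nonneg (by nlinarith [sq_nonneg (2 * l2 * t - a)]) (by positivity)

lemma quadratic_at_vertex (hl2 : 0 < l2) (a : ℝ) :
    l2 * (a / (2 * l2)) ^ 2 - a * (a / (2 * l2)) = -(a ^ 2 / (4 * l2)) := by
  field_simp
  ring

/-- Completing the square: `l2 * (l0 + l2 t² - 2 √(l0 l2) t) = (l2 t - √(l0 l2))²`. -/
lemma quadratic_nonneg_of_le_two_sqrt (hl0 : 0 ≤ l0) (hl2 : 0 < l2) {a t : ℝ}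
    (ha : a ≤ 2 * Real.sqrt (l0 * l2)) (ht : 0 ≤ t) : 0 ≤ l0 + l2 * t ^ 2 - a * t := by
  have hs : Real.sqrt (l0 * l2) ^ 2 = l0 * l2 := Real.sq_sqrt (by positivity)
  have hat : a * t ≤ 2 * Real.sqrt (l0 * l2) * t := mul_le_mul_of_nonneg_right ha ht
  nlinarith [sq_nonneg (l2 * t - Real.sqrt (l0 * l2))]

lemma four_mul_lt_sq_of_two_sqrt_lt (hl0 : 0 ≤ l0) (hl2 : 0 < l2) {a : ℝ}
    (ha : 2 * Real.sqrt (l0 * l2) < a) : l0 < a ^ 2 / (4 * l2) := by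
  have hs : Real.sqrt (l0 * l2) ^ 2 = l0 * l2 := Real.sq_sqrt (by positivity)
  rw [lt_div_iff₀ (by positivity)]
  nlinarith [Real.sqrt_nonneg (l0 * l2)]

end L0L1L2Penalty

open L0L1L2Penalty in
theorem statement_0_general (l0 l1 l2 : ℝ) (hl0 : 0 < l0) (hl2 : 0 < l2)
    (τ : ℝ) :
    IsGLB
      (Set.range fun u : ℝ =>
        τ * u + l0 * (if u ≠ 0 then (1 : ℝ) else 0) + l1 * |u| + l2 * u ^ 2)
      (if 2 * Real.sqrt (l0 * l2) + l1 < |τ| then l0 - (|τ| - l1) ^ 2 / (4 * l2)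
       else 0) := by
  change IsGLB (Set.range (objective l0 l1 l2 τ)) _
  refine IsLeast.isGLB ?_
  split_ifs with hc
  · have ha : 2 * Real.sqrt (l0 * l2) < |τ| - l1 := by linarith
    have hvertex : 0 < (|τ| - l1) / (2 * l2) :=
      div_pos (by linarith [Real.sqrt_nonneg (l0 * l2)]) (by positivity)
    refine ⟨⟨_, (objective_neg_sign_mul hvertex).trans ?_⟩, ?_⟩
    · linarith [quadratic_at_vertex hl2 (|τ| - l1)]
    rintro _ ⟨u, rfl⟩
    by_cases hu : u = 0
    · simpa [hu] using (four_mul_lt_sq_of_two_sqrt_lt hl0.le hl2 ha).le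
    · calc l0 - (|τ| - l1) ^ 2 / (4 * l2)
          ≤ l0 + l2 * |u| ^ 2 - (|τ| - l1) * |u| := by
            linarith [neg_sq_div_le_quadratic hl2 (|τ| - l1) |u|]
        _ ≤ objective l0 l1 l2 τ u := reduced_le_objective hu
  · refine ⟨⟨0, objective_zero⟩, ?_⟩
    rintro _ ⟨u, rfl⟩
    by_cases hu : u = 0
    · simp [hu]
    · exact (quadratic_nonneg_of_le_two_sqrt hl0.le hl2 (by linarith) (abs_nonneg u)).trans
        (reduced_le_objective hu)

/-- For λ₀, λ₁, λ₂ > 0 and τ ∈ ℝ, the infimum over u ∈ ℝ of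
h(u) = τ·u + λ₀·𝟙{u ≠ 0} + λ₁·|u| + λ₂·u² equals
λ₀ − (|τ| − λ₁)²/(4λ₂) if |τ| > 2√(λ₀λ₂) + λ₁, and 0 otherwise. -/
theorem statement_0 (l0 l1 l2 : ℝ) (hl0 : 0 < l0) (hl1 : 0 < l1) (hl2 : 0 < l2)
    (τ : ℝ) :
    IsGLB
      (Set.range fun u : ℝ =>
        τ * u + l0 * (if u ≠ 0 then (1 : ℝ) else 0) + l1 * |u| + l2 * u ^ 2)
      (if 2 * Real.sqrt (l0 * l2) + l1 < |τ| then l0 - (|τ| - l1) ^ 2 / (4 * l2)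
       else 0) :=
  statement_0_general l0 l1 l2 hl0 hl2 τ
end

section
/- For all real parameters λ₀, λ₁, λ₂ > 0 and every τ ∈ ℝ, the set of minimizers over u ∈ ℝ of h(u) = τ·u + λ₀·𝟙{u ≠ 0} + λ₁·|u| + λ₂·u² is: the singleton {û} with û = −sign(τ)·(|τ| − λ₁)/(2λ₂) if |τ| > 2√(λ₀λ₂) + λ₁; the singleton {0} if |τ| < 2√(λ₀λ₂) + λ₁; and the two-point set {0, û} if |τ| = 2√(λ₀λ₂) + λ₁. -/
/-!
Write `A = |τ| - l1` and `s = √(l0 l2)`. For `u ≠ 0` the objective is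
`l0 + τ u + l1 |u| + l2 u² ≥ l0 - A |u| + l2 u²`, with equality exactly when `u` has the sign
opposite to `τ`. Completing the square in `|u|`, the best nonzero value is
`l0 - A² / (4 l2) = (2s - A)(2s + A) / (4 l2)`, attained only at `û`; comparing it with the
value `0` at `u = 0` gives the three cases. When `A < 2s` (possibly `A ≤ 0`), AM-GM
`2s |u| ≤ l0 + l2 u²` shows directly that every nonzero `u` has positive value.
-/

theorem setOf_forall_le_eq_of_lt {α β : Type*} [LinearOrder β] {f : α → β} {S : Set α} {c : β}
    (hS : S.Nonempty) (hval : ∀ u ∈ S, f u = c) (hlt : ∀ v ∉ S, c < f v) :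
    {u | ∀ v, f u ≤ f v} = S := by
  ext u
  refine ⟨fun hu => ?_, fun hu v => ?_⟩
  · by_contra huS
    obtain ⟨s, hs⟩ := hS
    exact (hu s).not_gt (hval s hs ▸ hlt u huS)
  · rw [hval u hu]
    by_cases hv : v ∈ S
    · exact (hval v hv).ge
    · exact (hlt v hv).le

namespace SparseProx

noncomputable def objective (l0 l1 l2 τ u : ℝ) : ℝ :=
  τ * u + l0 * (if u ≠ 0 then (1 : ℝ) else 0) + l1 * |u| + l2 * u ^ 2

noncomputable def shrink (l1 l2 τ : ℝ) : ℝ := -(Real.sign τ) * (|τ| - l1) / (2 * l2)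

noncomputable def minValue (l0 l1 l2 τ : ℝ) : ℝ := l0 - (|τ| - l1) ^ 2 / (4 * l2)

variable {l0 l1 l2 τ v : ℝ}

@[simp]
theorem objective_zero : objective l0 l1 l2 τ 0 = 0 := by
  simp [objective]

theorem objective_of_ne_zero (hv : v ≠ 0) :
    objective l0 l1 l2 τ v = l0 + τ * v + l1 * |v| + l2 * v ^ 2 := by
  simp only [objective, if_pos hv]
  ring

theorem objective_pos_of_abs_lt (hl0 : 0 ≤ l0) (hl2 : 0 ≤ l2)
    (hτ : |τ| < 2 * √(l0 * l2) + l1) (hv : v ≠ 0) : 0 < objective l0 l1 l2 τ v := by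
  have amgm : 2 * √(l0 * l2) * |v| ≤ l0 + l2 * v ^ 2 := by
    have h := two_mul_le_add_sq (√l0) (√l2 * |v|)
    rwa [mul_pow, Real.sq_sqrt hl0, Real.sq_sqrt hl2, sq_abs, ← mul_assoc,
      mul_assoc 2, ← Real.sqrt_mul hl0] at h
  have hlin : -(|τ| * |v|) ≤ τ * v := by
    rw [← abs_mul]
    exact neg_abs_le _
  have hgap : 0 < (2 * √(l0 * l2) + l1 - |τ|) * |v| :=
    mul_pos (by linarith) (abs_pos.2 hv)
  rw [objective_of_ne_zero hv]
  nlinarith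

theorem objective_eq_minValue_add (hl2 : l2 ≠ 0) (hv : v ≠ 0) :
    objective l0 l1 l2 τ v = minValue l0 l1 l2 τ + (τ * v + |τ| * |v|)
      + l2 * (|v| - (|τ| - l1) / (2 * l2)) ^ 2 := by
  rw [objective_of_ne_zero hv, minValue, ← sq_abs v]
  field_simp
  ring

theorem minValue_eq_mul (hl0 : 0 ≤ l0) (hl2 : 0 < l2) :
    minValue l0 l1 l2 τ
      = (2 * √(l0 * l2) - (|τ| - l1)) * (2 * √(l0 * l2) + (|τ| - l1)) / (4 * l2) := by
  have hs := Real.sq_sqrt (mul_nonneg hl0 hl2.le)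
  rw [minValue]
  field_simp
  linear_combination (-4) * hs

theorem abs_eq_and_mul_add_eq_zero_iff {c : ℝ} (hτ : τ ≠ 0) (hc : 0 ≤ c) :
    |v| = c ∧ τ * v + |τ| * |v| = 0 ↔ v = -Real.sign τ * c := by
  rcases hτ.lt_or_gt with hneg | hpos
  · rw [Real.sign_of_neg hneg, abs_of_neg hneg]
    constructor
    · rintro ⟨hvc, hsum⟩
      rw [hvc] at hsum
      linarith [mul_left_cancel₀ hτ (show τ * v = τ * c by linarith)]
    · rintro rfl
      simp [abs_of_nonneg hc]
  · rw [Real.sign_of_pos hpos, abs_of_pos hpos]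
    constructor
    · rintro ⟨hvc, hsum⟩
      rw [hvc] at hsum
      linarith [mul_left_cancel₀ hτ (show τ * v = τ * -c by linarith)]
    · rintro rfl
      simp [abs_of_nonneg hc]

theorem ne_zero_of_lt_abs (hl1 : 0 ≤ l1) (hτ : l1 < |τ|) : τ ≠ 0 := by
  rintro rfl
  rw [abs_zero] at hτ
  exact hτ.not_ge hl1

theorem shrink_eq (l1 l2 τ : ℝ) : shrink l1 l2 τ = -Real.sign τ * ((|τ| - l1) / (2 * l2)) :=
  mul_div_assoc _ _ _

theorem shrink_ne_zero (hl1 : 0 ≤ l1) (hl2 : 0 < l2) (hτ : l1 < |τ|) : shrink l1 l2 τ ≠ 0 := by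
  have hsign : Real.sign τ ≠ 0 := Real.sign_eq_zero_iff.not.2 (ne_zero_of_lt_abs hl1 hτ)
  rw [shrink_eq]
  have : (|τ| - l1) / (2 * l2) ≠ 0 := by positivity
  simp [hsign, this]

theorem objective_shrink (hl1 : 0 ≤ l1) (hl2 : 0 < l2) (hτ : l1 < |τ|) :
    objective l0 l1 l2 τ (shrink l1 l2 τ) = minValue l0 l1 l2 τ := by
  obtain ⟨habs, hsum⟩ := (abs_eq_and_mul_add_eq_zero_iff (ne_zero_of_lt_abs hl1 hτ)
    (by positivity : 0 ≤ (|τ| - l1) / (2 * l2))).2 (shrink_eq l1 l2 τ)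
  rw [objective_eq_minValue_add hl2.ne' (shrink_ne_zero hl1 hl2 hτ), hsum, habs]
  ring

theorem minValue_lt_objective (hl1 : 0 ≤ l1) (hl2 : 0 < l2) (hτ : l1 < |τ|) (hv0 : v ≠ 0)
    (hv : v ≠ shrink l1 l2 τ) : minValue l0 l1 l2 τ < objective l0 l1 l2 τ v := by
  have hlin : 0 ≤ τ * v + |τ| * |v| := by
    rw [← abs_mul]
    linarith [neg_abs_le (τ * v)]
  have hsq : 0 ≤ l2 * (|v| - (|τ| - l1) / (2 * l2)) ^ 2 := by positivity
  rw [objective_eq_minValue_add hl2.ne' hv0]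
  by_contra! hle
  refine hv ((abs_eq_and_mul_add_eq_zero_iff (ne_zero_of_lt_abs hl1 hτ)
    (by positivity)).1 ⟨?_, by linarith⟩ |>.trans (shrink_eq l1 l2 τ).symm)
  have : (|v| - (|τ| - l1) / (2 * l2)) ^ 2 = 0 := by
    nlinarith
  exact sub_eq_zero.1 (pow_eq_zero_iff two_ne_zero |>.1 this)

end SparseProx

open SparseProx in
/-- For λ₀, λ₁, λ₂ > 0 and τ ∈ ℝ, the set of minimizers over u ∈ ℝ of
h(u) = τ·u + λ₀·𝟙{u ≠ 0} + λ₁·|u| + λ₂·u² is {û} with û = −sign(τ)·(|τ| − λ₁)/(2λ₂)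
if |τ| > 2√(λ₀λ₂) + λ₁; {0} if |τ| < 2√(λ₀λ₂) + λ₁; and {0, û} if equality holds. -/
theorem statement_1 (l0 l1 l2 : ℝ) (hl0 : 0 < l0) (hl1 : 0 < l1) (hl2 : 0 < l2)
    (τ : ℝ) :
    {u : ℝ | ∀ v : ℝ,
        τ * u + l0 * (if u ≠ 0 then (1 : ℝ) else 0) + l1 * |u| + l2 * u ^ 2 ≤
        τ * v + l0 * (if v ≠ 0 then (1 : ℝ) else 0) + l1 * |v| + l2 * v ^ 2} =
      (if 2 * Real.sqrt (l0 * l2) + l1 < |τ| then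
        {-(Real.sign τ) * (|τ| - l1) / (2 * l2)}
      else if |τ| < 2 * Real.sqrt (l0 * l2) + l1 then
        ({0} : Set ℝ)
      else
        ({0, -(Real.sign τ) * (|τ| - l1) / (2 * l2)} : Set ℝ)) := by
  change {u | ∀ v, objective l0 l1 l2 τ u ≤ objective l0 l1 l2 τ v} = _
  have hs : 0 < √(l0 * l2) := Real.sqrt_pos.2 (mul_pos hl0 hl2)
  rcases lt_trichotomy (2 * √(l0 * l2) + l1) |τ| with hgt | heq | hlt
  · have hτ : l1 < |τ| := by linarith
    have hm : minValue l0 l1 l2 τ < 0 := by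
      rw [minValue_eq_mul hl0.le hl2]
      exact div_neg_of_neg_of_pos (mul_neg_of_neg_of_pos (by linarith) (by linarith))
        (by positivity)
    rw [if_pos hgt]
    refine setOf_forall_le_eq_of_lt (c := minValue l0 l1 l2 τ) (Set.singleton_nonempty _)
      (fun u hu => hu ▸ objective_shrink hl1.le hl2 hτ) fun v hv => ?_
    rcases eq_or_ne v 0 with rfl | hv0
    · simpa using hm
    · exact minValue_lt_objective hl1.le hl2 hτ hv0 hv
  · have hτ : l1 < |τ| := by linarith
    have hm : minValue l0 l1 l2 τ = 0 := by
      rw [minValue_eq_mul hl0.le hl2, ← heq]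
      ring
    rw [if_neg heq.not_lt, if_neg heq.not_gt]
    refine setOf_forall_le_eq_of_lt (c := 0) (Set.insert_nonempty _ _) ?_ fun v hv => ?_
    · rintro u (hu | hu) <;> rw [hu]
      · exact objective_zero
      · exact (objective_shrink hl1.le hl2 hτ).trans hm
    · simp only [Set.mem_insert_iff, Set.mem_singleton_iff, not_or] at hv
      exact hm ▸ minValue_lt_objective hl1.le hl2 hτ hv.1 hv.2
  · rw [if_neg hlt.not_gt, if_pos hlt]
    exact setOf_forall_le_eq_of_lt (c := 0) (Set.singleton_nonempty _)
      (fun u hu => by rw [Set.mem_singleton_iff.1 hu, objective_zero]) fun v hv => objective_pos_of_abs_lt hl0.le hl2.le hlt hv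
end

section
/- For all real parameters λ₀, λ₁, λ₂ > 0, every p ∈ ℕ and every τ ∈ ℝᵖ, the infimum over β ∈ ℝᵖ of ⟨τ, β⟩ + λ₀‖β‖₀ + λ₁‖β‖₁ + λ₂‖β‖² equals Σ_{j=1}^p Φ(τ_j), and this infimum is attained at the vector β* defined coordinatewise by β*_j = 𝔅(−τ_j/(2λ₂)). -/
/-!
The objective is separable: it is `∑ j, penalty (τ j) (β j)`, so it suffices to minimise one
coordinate. For `b ≠ 0` the scalar objective is at least `l0 + (l1 - |t|) |b| + l2 |b|²`, a
quadratic in `|b|` whose minimum `l0 - (|t| - l1)² / (4 l2)` is attained at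
`|b| = (|t| - l1) / (2 l2)` with `b` of sign opposite to `t`; for `b = 0` it is `0`. The hard
threshold `2 √(l0 l2) + l1` on `|t|` is exactly where these two values cross.
-/

theorem Real.sign_div_of_pos (x : ℝ) {c : ℝ} (hc : 0 < c) : Real.sign (x / c) = Real.sign x := by
  rcases lt_trichotomy x 0 with hx | rfl | hx
  · rw [Real.sign_of_neg hx, Real.sign_of_neg (div_neg_of_neg_of_pos hx hc)]
  · rw [zero_div]
  · rw [Real.sign_of_pos hx, Real.sign_of_pos (div_pos hx hc)]

noncomputable def penalty (l0 l1 l2 t b : ℝ) : ℝ :=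
  t * b + l0 * (if b ≠ 0 then 1 else 0) + l1 * |b| + l2 * b ^ 2

noncomputable def phi (l0 l1 l2 t : ℝ) : ℝ :=
  if 2 * Real.sqrt (l0 * l2) + l1 < |t| then l0 - (|t| - l1) ^ 2 / (4 * l2) else 0

noncomputable def hardThreshold (l0 l1 l2 η : ℝ) : ℝ :=
  if (2 * Real.sqrt (l0 * l2) + l1) / (2 * l2) < |η| then
    Real.sign η * (|η| - l1 / (2 * l2))
  else 0

section

variable {l0 l1 l2 : ℝ}

theorem sum_penalty {ι : Type*} [Fintype ι] (τ β : ι → ℝ) :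
    ∑ j, penalty l0 l1 l2 (τ j) (β j) =
      (∑ j, τ j * β j) + l0 * ((Finset.univ.filter fun j => β j ≠ 0).card : ℝ)
        + l1 * (∑ j, |β j|) + l2 * (∑ j, (β j) ^ 2) := by
  simp only [penalty, Finset.sum_add_distrib, ← Finset.mul_sum, Finset.sum_boole]

theorem phi_nonpos (hl0 : 0 ≤ l0) (hl2 : 0 < l2) (t : ℝ) : phi l0 l1 l2 t ≤ 0 := by
  unfold phi
  split_ifs with h
  · have hs : Real.sqrt (l0 * l2) ^ 2 = l0 * l2 := Real.sq_sqrt (by positivity)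
    rw [sub_nonpos, le_div_iff₀ (by positivity)]
    nlinarith [Real.sqrt_nonneg (l0 * l2)]
  · exact le_rfl

/-- Completing the square in `a`, together with `l0 - 2 √(l0 l2) a + l2 a² ≥ 0` below the
threshold. -/
theorem phi_le_of_pos (hl0 : 0 ≤ l0) (hl2 : 0 < l2) (t : ℝ) {a : ℝ} (ha : 0 < a) :
    phi l0 l1 l2 t ≤ l0 + (l1 - |t|) * a + l2 * a ^ 2 := by
  have hs : Real.sqrt (l0 * l2) ^ 2 = l0 * l2 := Real.sq_sqrt (by positivity)
  unfold phi
  split_ifs with h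
  · rw [sub_le_iff_le_add, ← sub_le_iff_le_add', le_div_iff₀ (by positivity)]
    nlinarith [sq_nonneg (2 * l2 * a - (|t| - l1))]
  · nlinarith [sq_nonneg (Real.sqrt (l0 * l2) - l2 * a),
      mul_le_mul_of_nonneg_right (not_lt.1 h) ha.le]

theorem phi_le_penalty (hl0 : 0 ≤ l0) (hl2 : 0 < l2) (t b : ℝ) :
    phi l0 l1 l2 t ≤ penalty l0 l1 l2 t b := by
  rcases eq_or_ne b 0 with rfl | hb
  · simpa [penalty] using phi_nonpos hl0 hl2 t
  have htb : -(|t| * |b|) ≤ t * b := by rw [← abs_mul]; exact neg_abs_le _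
  calc phi l0 l1 l2 t ≤ l0 + (l1 - |t|) * |b| + l2 * |b| ^ 2 :=
        phi_le_of_pos hl0 hl2 t (abs_pos.2 hb)
    _ ≤ penalty l0 l1 l2 t b := by simp only [penalty, if_pos hb, sq_abs]; linarith

theorem penalty_neg_sign_mul {t c : ℝ} (ht : t ≠ 0) (hc : 0 < c) :
    penalty l0 l1 l2 t (-Real.sign t * c) = l0 + (l1 - |t|) * c + l2 * c ^ 2 := by
  rcases ht.lt_or_gt with ht | ht
  · simp [penalty, Real.sign_of_neg ht, abs_of_neg ht, abs_of_pos hc, hc.ne']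
    ring
  · simp [penalty, Real.sign_of_pos ht, abs_of_pos ht, abs_of_pos hc, hc.ne']
    ring

theorem hardThreshold_neg_div (hl2 : 0 < l2) (t : ℝ) :
    hardThreshold l0 l1 l2 (-t / (2 * l2)) =
      if 2 * Real.sqrt (l0 * l2) + l1 < |t| then -Real.sign t * ((|t| - l1) / (2 * l2))
      else 0 := by
  have h2l2 : 0 < 2 * l2 := by positivity
  have habs : |-t / (2 * l2)| = |t| / (2 * l2) := by rw [abs_div, abs_neg, abs_of_pos h2l2]
  have hsign : Real.sign (-t / (2 * l2)) = -Real.sign t := by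
    rw [Real.sign_div_of_pos _ h2l2, Real.sign_neg]
  simp only [hardThreshold, habs, hsign, div_lt_div_iff_of_pos_right h2l2, sub_div]

theorem penalty_hardThreshold (hl1 : 0 ≤ l1) (hl2 : 0 < l2) (t : ℝ) :
    penalty l0 l1 l2 t (hardThreshold l0 l1 l2 (-t / (2 * l2))) = phi l0 l1 l2 t := by
  rw [hardThreshold_neg_div hl2, phi]
  split_ifs with h
  · have hs := Real.sqrt_nonneg (l0 * l2)
    have hc : 0 < (|t| - l1) / (2 * l2) := div_pos (by linarith) (by positivity)
    have ht : t ≠ 0 := abs_pos.1 (by linarith)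
    rw [penalty_neg_sign_mul ht hc]
    field_simp
    ring
  · simp [penalty]

end

/-- For λ₀, λ₁, λ₂ > 0, p ∈ ℕ and τ ∈ ℝᵖ, the infimum over β ∈ ℝᵖ of
⟨τ,β⟩ + λ₀‖β‖₀ + λ₁‖β‖₁ + λ₂‖β‖² equals Σ_j Φ(τ_j), attained at β*_j = 𝔅(−τ_j/(2λ₂)). -/
theorem statement_2 (l0 l1 l2 : ℝ) (hl0 : 0 < l0) (hl1 : 0 < l1) (hl2 : 0 < l2)
    (p : ℕ) (τ : Fin p → ℝ)
    (Φ : ℝ → ℝ)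
    (hΦ : ∀ t : ℝ, Φ t =
      if 2 * Real.sqrt (l0 * l2) + l1 < |t| then l0 - (|t| - l1) ^ 2 / (4 * l2)
      else 0)
    (B : ℝ → ℝ)
    (hB : ∀ η : ℝ, B η =
      if (2 * Real.sqrt (l0 * l2) + l1) / (2 * l2) < |η| then
        Real.sign η * (|η| - l1 / (2 * l2))
      else 0)
    (F : (Fin p → ℝ) → ℝ)
    (hF : ∀ β : Fin p → ℝ, F β =
      (∑ j, τ j * β j)
        + l0 * ((Finset.univ.filter fun j => β j ≠ 0).card : ℝ)
        + l1 * (∑ j, |β j|)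
        + l2 * (∑ j, (β j) ^ 2))
    (βstar : Fin p → ℝ)
    (hβstar : ∀ j, βstar j = B (-(τ j) / (2 * l2))) :
    (∀ β : Fin p → ℝ, (∑ j, Φ (τ j)) ≤ F β) ∧ F βstar = ∑ j, Φ (τ j) := by
  obtain rfl : Φ = phi l0 l1 l2 := funext hΦ
  obtain rfl : B = hardThreshold l0 l1 l2 := funext hB
  obtain rfl : F = fun β => ∑ j, penalty l0 l1 l2 (τ j) (β j) :=
    funext fun β => (hF β).trans (sum_penalty τ β).symm
  refine ⟨fun β => Finset.sum_le_sum fun j _ => phi_le_penalty hl0.le hl2 (τ j) (β j), ?_⟩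
  exact Finset.sum_congr rfl fun j _ => by rw [hβstar, penalty_hardThreshold hl1.le hl2]
end

section
/- For all real parameters λ₀, λ₁, λ₂ > 0, the function Φ : ℝ → ℝ is concave on ℝ. -/
open scoped Classical

/-
Write `q(τ) = max(|τ| - λ₁, 0)`. The cut-off `|τ| > 2√(λ₀λ₂) + λ₁` is exactly where the parabola
`λ₀ - q²/(4λ₂)` becomes negative, so `Φ = min 0 (λ₀ - q²/(4λ₂))`. Since `q` is convex and
nonnegative, `q²` is convex, so `λ₀ - q²/(4λ₂)` is concave, and a minimum of concave functions is
concave.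
-/

lemma le_two_mul_sqrt_iff_sq_le {a c s : ℝ} (hac : 0 ≤ a * c) (hs : 0 ≤ s) :
    s ≤ 2 * √(a * c) ↔ s ^ 2 ≤ 4 * (a * c) := by
  have hsq : (2 * √(a * c)) ^ 2 = 4 * (a * c) := by rw [mul_pow, Real.sq_sqrt hac]; norm_num
  rw [← hsq, sq_le_sq₀ hs (by positivity)]

lemma sub_sq_div_nonneg_iff_le_two_mul_sqrt {a c s : ℝ} (ha : 0 ≤ a) (hc : 0 < c) (hs : 0 ≤ s) :
    0 ≤ a - s ^ 2 / (4 * c) ↔ s ≤ 2 * √(a * c) := by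
  rw [le_two_mul_sqrt_iff_sq_le (by positivity) hs, sub_nonneg, div_le_iff₀ (by positivity)]
  constructor <;> intro h <;> linarith

lemma ite_two_mul_sqrt_lt_eq_min {a c s : ℝ} (ha : 0 ≤ a) (hc : 0 < c) :
    (if 2 * √(a * c) < s then a - s ^ 2 / (4 * c) else 0)
      = min 0 (a - max s 0 ^ 2 / (4 * c)) := by
  have hsqrt : 0 ≤ 2 * √(a * c) := by positivity
  split_ifs with h
  · have hs : 0 ≤ s := hsqrt.trans h.le
    have hneg : ¬ 0 ≤ a - s ^ 2 / (4 * c) := by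
      rw [sub_sq_div_nonneg_iff_le_two_mul_sqrt ha hc hs]
      exact not_le.2 h
    rw [max_eq_left hs, min_eq_right (le_of_not_ge hneg)]
  · have hmax : max s 0 ≤ 2 * √(a * c) := max_le (not_lt.1 h) hsqrt
    rw [min_eq_left ((sub_sq_div_nonneg_iff_le_two_mul_sqrt ha hc (le_max_right s 0)).2 hmax)]

lemma ConvexOn.concaveOn_const_sub_sq_div {E : Type*} [AddCommGroup E] [Module ℝ E] {S : Set E}
    {g : E → ℝ} (hg : ConvexOn ℝ S g) (hg0 : ∀ x ∈ S, 0 ≤ g x) (a : ℝ) {b : ℝ} (hb : 0 < b) :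
    ConcaveOn ℝ S (fun x => a - g x ^ 2 / b) := by
  have hsq : ConvexOn ℝ S (fun x => g x ^ 2 / b) := by
    simpa only [Pi.pow_def, smul_eq_mul, div_eq_inv_mul] using
      (hg.pow hg0 2).smul (inv_nonneg.2 hb.le)
  simpa only [Pi.add_def, Pi.neg_def, sub_eq_neg_add] using hsq.neg.add_const a

lemma convexOn_max_abs_sub_zero (l : ℝ) : ConvexOn ℝ Set.univ (fun t : ℝ => max (|t| - l) 0) := by
  have h := ((convexOn_univ_norm (E := ℝ)).add_const (-l)).sup (convexOn_const 0 convex_univ)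
  simpa only [Pi.add_def, Pi.sup_def, Real.norm_eq_abs, sub_eq_add_neg] using h

theorem statement_3_general (l0 l1 l2 : ℝ) (hl0 : 0 < l0) (hl2 : 0 < l2)
    (Φ : ℝ → ℝ)
    (hΦ : ∀ t : ℝ, Φ t =
      if 2 * Real.sqrt (l0 * l2) + l1 < |t| then l0 - (|t| - l1) ^ 2 / (4 * l2)
      else 0) :
    ConcaveOn ℝ Set.univ Φ := by
  have hΦ_min : Φ = fun t => min 0 (l0 - max (|t| - l1) 0 ^ 2 / (4 * l2)) := by
    funext t
    rw [hΦ t, ← ite_two_mul_sqrt_lt_eq_min hl0.le hl2]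
    simp only [lt_sub_iff_add_lt]
  rw [hΦ_min]
  exact (concaveOn_const 0 convex_univ).inf
    ((convexOn_max_abs_sub_zero l1).concaveOn_const_sub_sq_div (fun _ _ => le_max_right _ _) l0
      (by positivity))

/-- For λ₀, λ₁, λ₂ > 0, the function Φ is concave on ℝ, where
Φ(τ) = λ₀ − (|τ| − λ₁)²/(4λ₂) if |τ| > 2√(λ₀λ₂) + λ₁ and Φ(τ) = 0 otherwise. -/
theorem statement_3 (l0 l1 l2 : ℝ) (hl0 : 0 < l0) (hl1 : 0 < l1) (hl2 : 0 < l2)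
    (Φ : ℝ → ℝ)
    (hΦ : ∀ t : ℝ, Φ t =
      if 2 * Real.sqrt (l0 * l2) + l1 < |t| then l0 - (|t| - l1) ^ 2 / (4 * l2)
      else 0) :
    ConcaveOn ℝ Set.univ Φ :=
  statement_3_general l0 l1 l2 hl0 hl2 Φ hΦ
end

section
/- Let α ∈ ℝⁿ satisfy |η_j(α)| ≠ η₀ for every j ∈ {1,…,p}, and let β(α) ∈ ℝᵖ be defined by β(α)_j = 𝔅(η_j(α)). Then Σ_{j=1}^p Φ(x₍·j₎ᵀα) = λ₀‖β(α)‖₀ − λ₂‖β(α)‖². -/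
open scoped Classical

/-! Writing `τ = -2λ₂η`, the condition `|τ| > 2√(λ₀λ₂) + λ₁` of `Φ` is exactly the condition
`|η| > η₀` of `𝔅`, and on that region `λ₂ 𝔅(η)² = (|τ| - λ₁)² / (4λ₂)` because `sign η` squares
to `1`. Hence `Φ(τ) = λ₀ [𝔅(η) ≠ 0] - λ₂ 𝔅(η)²` coordinatewise, and summing over `j` gives the
identity. -/

noncomputable section

namespace L0L2Threshold

variable (l0 l1 l2 : ℝ)

def thresholdMap (η : ℝ) : ℝ :=
  if (2 * Real.sqrt (l0 * l2) + l1) / (2 * l2) < |η| then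
    Real.sign η * (|η| - l1 / (2 * l2))
  else 0

def conjugatePenalty (τ : ℝ) : ℝ :=
  if 2 * Real.sqrt (l0 * l2) + l1 < |τ| then l0 - (|τ| - l1) ^ 2 / (4 * l2) else 0

variable {l0 l1 l2}

theorem shift_lt_of_threshold_lt (hl2 : 0 < l2) {η : ℝ}
    (h : (2 * Real.sqrt (l0 * l2) + l1) / (2 * l2) < |η|) : l1 / (2 * l2) < |η| :=
  lt_of_le_of_lt (div_le_div_of_nonneg_right (by linarith [Real.sqrt_nonneg (l0 * l2)])
    (by linarith)) h

theorem ne_zero_of_threshold_lt (hl1 : 0 < l1) (hl2 : 0 < l2) {η : ℝ}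
    (h : (2 * Real.sqrt (l0 * l2) + l1) / (2 * l2) < |η|) : η ≠ 0 :=
  abs_pos.mp (lt_of_le_of_lt (by positivity) h)

theorem thresholdMap_ne_zero_iff (hl1 : 0 < l1) (hl2 : 0 < l2) {η : ℝ} :
    thresholdMap l0 l1 l2 η ≠ 0 ↔ (2 * Real.sqrt (l0 * l2) + l1) / (2 * l2) < |η| := by
  unfold thresholdMap
  split_ifs with h
  · simp only [h, iff_true]
    exact mul_ne_zero (Real.sign_eq_zero_iff.not.mpr (ne_zero_of_threshold_lt hl1 hl2 h))
      (sub_ne_zero.mpr (shift_lt_of_threshold_lt hl2 h).ne')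
  · simp [h]

theorem sq_thresholdMap (hl1 : 0 < l1) (hl2 : 0 < l2) {η : ℝ}
    (h : (2 * Real.sqrt (l0 * l2) + l1) / (2 * l2) < |η|) :
    thresholdMap l0 l1 l2 η ^ 2 = (|η| - l1 / (2 * l2)) ^ 2 := by
  have hη := ne_zero_of_threshold_lt hl1 hl2 h
  rw [thresholdMap, if_pos h, mul_pow]
  rcases Real.sign_apply_eq_of_ne_zero η hη with hs | hs <;> simp [hs]

theorem conjugatePenalty_eq (hl1 : 0 < l1) (hl2 : 0 < l2) (τ : ℝ) :
    conjugatePenalty l0 l1 l2 τ =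
      (if thresholdMap l0 l1 l2 (-τ / (2 * l2)) ≠ 0 then l0 else 0)
        - l2 * thresholdMap l0 l1 l2 (-τ / (2 * l2)) ^ 2 := by
  have h2l2 : 0 < 2 * l2 := by linarith
  have habs : |-τ / (2 * l2)| = |τ| / (2 * l2) := by
    rw [abs_div, abs_neg, abs_of_pos h2l2]
  have hcond : 2 * Real.sqrt (l0 * l2) + l1 < |τ| ↔
      (2 * Real.sqrt (l0 * l2) + l1) / (2 * l2) < |-τ / (2 * l2)| := by
    rw [habs, div_lt_div_iff_of_pos_right h2l2]
  rw [conjugatePenalty, if_congr (thresholdMap_ne_zero_iff hl1 hl2) rfl rfl]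
  by_cases h : 2 * Real.sqrt (l0 * l2) + l1 < |τ|
  · rw [if_pos h, if_pos (hcond.mp h), sq_thresholdMap hl1 hl2 (hcond.mp h), habs]
    field_simp
    ring
  · have hB : thresholdMap l0 l1 l2 (-τ / (2 * l2)) = 0 := by
      rw [thresholdMap, if_neg (hcond.not.mp h)]
    rw [if_neg h, if_neg (hcond.not.mp h), hB]
    ring

end L0L2Threshold

end

open L0L2Threshold in
theorem statement_6_general (l0 l1 l2 : ℝ) (hl1 : 0 < l1) (hl2 : 0 < l2)
    (n p : ℕ) (X : Matrix (Fin n) (Fin p) ℝ)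
    (Φ : ℝ → ℝ)
    (hΦ : ∀ t : ℝ, Φ t =
      if 2 * Real.sqrt (l0 * l2) + l1 < |t| then l0 - (|t| - l1) ^ 2 / (4 * l2)
      else 0)
    (B : ℝ → ℝ)
    (hB : ∀ η : ℝ, B η =
      if (2 * Real.sqrt (l0 * l2) + l1) / (2 * l2) < |η| then
        Real.sign η * (|η| - l1 / (2 * l2))
      else 0)
    (α : Fin n → ℝ)
    (η : Fin p → ℝ)
    (hη : ∀ j, η j = -(∑ i, X i j * α i) / (2 * l2))
    (β : Fin p → ℝ)
    (hβ : ∀ j, β j = B (η j)) :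
    (∑ j, Φ (∑ i, X i j * α i)) =
      l0 * ((Finset.univ.filter fun j => β j ≠ 0).card : ℝ)
        - l2 * (∑ j, (β j) ^ 2) := by
  obtain rfl : Φ = conjugatePenalty l0 l1 l2 := funext hΦ
  obtain rfl : B = thresholdMap l0 l1 l2 := funext hB
  calc ∑ j, conjugatePenalty l0 l1 l2 (∑ i, X i j * α i)
      = ∑ j, ((if β j ≠ 0 then l0 else 0) - l2 * β j ^ 2) :=
        Finset.sum_congr rfl fun j _ => by rw [conjugatePenalty_eq hl1 hl2, hβ, hη]
    _ = _ := by
        rw [Finset.sum_sub_distrib, ← Finset.mul_sum, Finset.sum_ite, Finset.sum_const,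
          Finset.sum_const_zero, nsmul_eq_mul, add_zero, mul_comm]

/-- If |η_j(α)| ≠ η₀ for all j and β(α)_j = 𝔅(η_j(α)), then
Σ_j Φ(x₍·j₎ᵀα) = λ₀‖β(α)‖₀ − λ₂‖β(α)‖². -/
theorem statement_6 (l0 l1 l2 : ℝ) (hl0 : 0 < l0) (hl1 : 0 < l1) (hl2 : 0 < l2)
    (n p : ℕ) (X : Matrix (Fin n) (Fin p) ℝ)
    (Φ : ℝ → ℝ)
    (hΦ : ∀ t : ℝ, Φ t =
      if 2 * Real.sqrt (l0 * l2) + l1 < |t| then l0 - (|t| - l1) ^ 2 / (4 * l2)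
      else 0)
    (B : ℝ → ℝ)
    (hB : ∀ η : ℝ, B η =
      if (2 * Real.sqrt (l0 * l2) + l1) / (2 * l2) < |η| then
        Real.sign η * (|η| - l1 / (2 * l2))
      else 0)
    (α : Fin n → ℝ)
    (η : Fin p → ℝ)
    (hη : ∀ j, η j = -(∑ i, X i j * α i) / (2 * l2))
    (hne : ∀ j, |η j| ≠ (2 * Real.sqrt (l0 * l2) + l1) / (2 * l2))
    (β : Fin p → ℝ)
    (hβ : ∀ j, β j = B (η j)) :
    (∑ j, Φ (∑ i, X i j * α i)) =
      l0 * ((Finset.univ.filter fun j => β j ≠ 0).card : ℝ)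
        - l2 * (∑ j, (β j) ^ 2) :=
  statement_6_general l0 l1 l2 hl1 hl2 n p X Φ hΦ B hB α η hη β hβ
end

section
/- A pair (β̄, ᾱ) ∈ ℝᵖ × ℝⁿ is a saddle point of the square-loss Lagrangian L if and only if the following three conditions hold: (a) β̄ minimizes P over ℝᵖ, i.e. P(β̄) ≤ P(β) for all β ∈ ℝᵖ; (b) ᾱ = Xβ̄ − y; (c) the link condition holds: for every j ∈ {1,…,p}, either β̄_j = 0 and |η_j(ᾱ)| ≤ η₀, or β̄_j = sign(η_j(ᾱ))·(|η_j(ᾱ)| − λ₁/(2λ₂)) and |η_j(ᾱ)| ≥ η₀. -/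
/-!
Completing the square in `α` gives `L(β, α) = P(β) - ½‖α - (Xβ - y)‖²`, so `L(β̄, ·)` is maximal
exactly at the residual `Xβ̄ - y`, and `L(·, ᾱ) ≤ P` with equality at `β̄`. In `β`, `L(·, ᾱ)`
splits into the scalar problems `l2 t² - 2 l2 e t + l1 |t| + l0 [t ≠ 0]` with `e = η_j(ᾱ)`.
On `t ≠ 0` such a problem is solved by soft thresholding, `t = sign e (|e| - l1 / (2 l2))`, with
value `l0 - l2 (|e| - l1 / (2 l2))²`; comparing it with the value `0` at `t = 0` yields the hard
threshold `η₀`.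
-/

open scoped Classical
open Finset

noncomputable def scalarObjective (l0 l1 l2 e t : ℝ) : ℝ :=
  l2 * t ^ 2 - 2 * l2 * e * t + l1 * |t| + l0 * if t = 0 then 0 else 1

@[simp] lemma scalarObjective_zero (l0 l1 l2 e : ℝ) : scalarObjective l0 l1 l2 e 0 = 0 := by
  simp [scalarObjective]

-- `l2 * |e| - l1 / 2` is `l2` times the soft-thresholded magnitude of `e`.
lemma mul_scalarObjective_of_ne_zero (l0 l1 l2 e : ℝ) {t : ℝ} (ht : t ≠ 0) :
    l2 * scalarObjective l0 l1 l2 e t =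
      (l2 * |t| - (l2 * |e| - l1 / 2)) ^ 2 + 2 * l2 ^ 2 * (|e| * |t| - e * t)
        + (l0 * l2 - (l2 * |e| - l1 / 2) ^ 2) := by
  simp only [scalarObjective, ht, if_false, mul_one]
  linear_combination (-l2 ^ 2) * sq_abs t

lemma sq_add_le_mul_scalarObjective (l0 l1 l2 e : ℝ) {t : ℝ} (ht : t ≠ 0) :
    (l2 * |t| - (l2 * |e| - l1 / 2)) ^ 2 + (l0 * l2 - (l2 * |e| - l1 / 2) ^ 2) ≤
      l2 * scalarObjective l0 l1 l2 e t := by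
  have : e * t ≤ |e| * |t| := abs_mul e t ▸ le_abs_self (e * t)
  rw [mul_scalarObjective_of_ne_zero l0 l1 l2 e ht]
  nlinarith

lemma eq_sign_mul_of_abs_mul_eq {e b : ℝ} (he : e ≠ 0) (h : |e| * |b| = e * b) :
    b = Real.sign e * |b| := by
  rcases he.lt_or_gt with he | he
  · rw [abs_of_neg he] at h
    have hb : |b| = -b := mul_left_cancel₀ (neg_ne_zero.2 he.ne) (by rw [h]; ring)
    rw [Real.sign_of_neg he, hb]
    ring
  · rw [abs_of_pos he] at h
    rw [Real.sign_of_pos he, one_mul, mul_left_cancel₀ he.ne' h]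

section Scalar

variable {l0 l1 l2 : ℝ}

lemma mul_scalarObjective_softThreshold (hl1 : 0 ≤ l1) (hl2 : 0 < l2) {e : ℝ}
    (hu : 0 < l2 * |e| - l1 / 2) :
    l2 * scalarObjective l0 l1 l2 e (Real.sign e * (|e| - l1 / (2 * l2))) =
      l0 * l2 - (l2 * |e| - l1 / 2) ^ 2 := by
  have hc : l2 * (|e| - l1 / (2 * l2)) = l2 * |e| - l1 / 2 := by field_simp
  have he : e ≠ 0 := by rintro rfl; simp at hu; linarith
  have hpos : 0 < |e| - l1 / (2 * l2) := pos_of_mul_pos_right (hc ▸ hu) hl2.le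
  have hne : Real.sign e * (|e| - l1 / (2 * l2)) ≠ 0 :=
    mul_ne_zero (Real.sign_eq_zero_iff.not.2 he) hpos.ne'
  rw [mul_scalarObjective_of_ne_zero l0 l1 l2 e hne, abs_mul, abs_of_pos hpos]
  rcases he.lt_or_gt with he | he
  · rw [Real.sign_of_neg he, abs_neg, abs_one, one_mul, hc, abs_of_neg he]
    ring
  · rw [Real.sign_of_pos he, abs_one, one_mul, hc, abs_of_pos he]
    ring

lemma scalarObjective_nonneg (hl0 : 0 ≤ l0) (hl2 : 0 < l2) {e : ℝ}
    (hu : l2 * |e| - l1 / 2 ≤ √(l0 * l2)) (t : ℝ) : 0 ≤ scalarObjective l0 l1 l2 e t := by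
  rcases eq_or_ne t 0 with rfl | ht
  · simp
  have hs : √(l0 * l2) ^ 2 = l0 * l2 := Real.sq_sqrt (by positivity)
  have := sq_add_le_mul_scalarObjective l0 l1 l2 e ht
  have : 0 ≤ l2 * |t| := by positivity
  refine nonneg_of_mul_nonneg_right ?_ hl2
  nlinarith [sq_nonneg (l2 * |t| - √(l0 * l2)), mul_le_mul_of_nonneg_left hu this]

lemma scalarObjective_softThreshold_le (hl0 : 0 < l0) (hl1 : 0 ≤ l1) (hl2 : 0 < l2) {e : ℝ}
    (hu : √(l0 * l2) ≤ l2 * |e| - l1 / 2) (t : ℝ) :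
    scalarObjective l0 l1 l2 e (Real.sign e * (|e| - l1 / (2 * l2))) ≤
      scalarObjective l0 l1 l2 e t := by
  have hs : √(l0 * l2) ^ 2 = l0 * l2 := Real.sq_sqrt (by positivity)
  have hs0 : 0 < √(l0 * l2) := by positivity
  refine le_of_mul_le_mul_left ?_ hl2
  rw [mul_scalarObjective_softThreshold hl1 hl2 (hs0.trans_le hu)]
  rcases eq_or_ne t 0 with rfl | ht
  · simp only [scalarObjective_zero, mul_zero]
    nlinarith
  · nlinarith [sq_add_le_mul_scalarObjective l0 l1 l2 e ht]

lemma scalarObjective_minimizer_cases (hl0 : 0 < l0) (hl1 : 0 ≤ l1) (hl2 : 0 < l2) {e b : ℝ}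
    (h : ∀ t, scalarObjective l0 l1 l2 e b ≤ scalarObjective l0 l1 l2 e t) :
    (b = 0 ∧ l2 * |e| - l1 / 2 ≤ √(l0 * l2)) ∨
      (b = Real.sign e * (|e| - l1 / (2 * l2)) ∧ √(l0 * l2) ≤ l2 * |e| - l1 / 2) := by
  have hs : √(l0 * l2) ^ 2 = l0 * l2 := Real.sq_sqrt (by positivity)
  have hs0 : 0 < √(l0 * l2) := by positivity
  rcases eq_or_ne b 0 with rfl | hb
  · refine .inl ⟨rfl, le_of_not_gt fun hu => ?_⟩
    have hsoft := mul_scalarObjective_softThreshold (l0 := l0) hl1 hl2 (hs0.trans hu)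
    have := h (Real.sign e * (|e| - l1 / (2 * l2)))
    rw [scalarObjective_zero] at this
    nlinarith
  have hid := mul_scalarObjective_of_ne_zero l0 l1 l2 e hb
  have hsign : 0 ≤ |e| * |b| - e * b := sub_nonneg.2 (abs_mul e b ▸ le_abs_self (e * b))
  have hb0 : 0 < l2 * |b| := by positivity
  have h0 : l2 * scalarObjective l0 l1 l2 e b ≤ 0 :=
    mul_nonpos_of_nonneg_of_nonpos hl2.le (by simpa using h 0)
  have hu : 0 < l2 * |e| - l1 / 2 := by nlinarith
  have hsu : √(l0 * l2) ≤ l2 * |e| - l1 / 2 := by nlinarith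
  have hmin := mul_le_mul_of_nonneg_left (h (Real.sign e * (|e| - l1 / (2 * l2)))) hl2.le
  rw [mul_scalarObjective_softThreshold hl1 hl2 hu, hid] at hmin
  have habs : l2 * |b| = l2 * |e| - l1 / 2 := by nlinarith
  have hsign' : |e| * |b| = e * b := by
    rw [habs, sub_self, zero_pow two_ne_zero, zero_add] at hmin
    nlinarith [nonpos_of_mul_nonpos_right (by linarith : 2 * l2 ^ 2 * (|e| * |b| - e * b) ≤ 0)
      (by positivity)]
  have he : e ≠ 0 := by rintro rfl; simp at hu; linarith
  refine .inr ⟨?_, hsu⟩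
  rw [eq_sign_mul_of_abs_mul_eq he hsign']
  congr 1
  field_simp
  linarith

theorem scalarObjective_minimizer_iff (hl0 : 0 < l0) (hl1 : 0 ≤ l1) (hl2 : 0 < l2) (e b : ℝ) :
    (∀ t, scalarObjective l0 l1 l2 e b ≤ scalarObjective l0 l1 l2 e t) ↔
      (b = 0 ∧ |e| ≤ (2 * √(l0 * l2) + l1) / (2 * l2)) ∨
        (b = Real.sign e * (|e| - l1 / (2 * l2)) ∧ (2 * √(l0 * l2) + l1) / (2 * l2) ≤ |e|) := by
  have h2l2 : 0 < 2 * l2 := by positivity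
  rw [le_div_iff₀ h2l2, div_le_iff₀ h2l2]
  refine ⟨fun h => ?_, ?_⟩
  · rcases scalarObjective_minimizer_cases hl0 hl1 hl2 h with ⟨hb, hu⟩ | ⟨hb, hu⟩
    · exact .inl ⟨hb, by linarith⟩
    · exact .inr ⟨hb, by linarith⟩
  · rintro (⟨rfl, hu⟩ | ⟨rfl, hu⟩)
    · simpa using scalarObjective_nonneg hl0.le hl2 (by linarith)
    · exact scalarObjective_softThreshold_le hl0 hl1 hl2 (by linarith)

end Scalar

lemma forall_sum_le_sum_iff {ι : Type*} [Fintype ι] [DecidableEq ι] (f : ι → ℝ → ℝ)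
    (x : ι → ℝ) : (∀ z : ι → ℝ, ∑ i, f i (x i) ≤ ∑ i, f i (z i)) ↔ ∀ i t, f i (x i) ≤ f i t := by
  refine ⟨fun h i t => le_of_not_gt fun hlt => (h (Function.update x i t)).not_gt ?_,
    fun h z => sum_le_sum fun i _ => h i (z i)⟩
  refine sum_lt_sum (fun j _ => ?_) ⟨i, mem_univ i, by simpa using hlt⟩
  rcases eq_or_ne j i with rfl | hj
  · simpa using hlt.le
  · simp [hj]

lemma forall_sum_sq_sub_le_iff {ι : Type*} [Fintype ι] (r a : ι → ℝ) :
    (∀ α : ι → ℝ, ∑ i, (a i - r i) ^ 2 ≤ ∑ i, (α i - r i) ^ 2) ↔ ∀ i, a i = r i := by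
  refine ⟨fun h i => ?_, fun h α => ?_⟩
  · have hzero : ∑ i, (a i - r i) ^ 2 = 0 :=
      le_antisymm (by simpa using h r) (sum_nonneg fun i _ => sq_nonneg _)
    have := (sum_eq_zero_iff_of_nonneg fun i _ => sq_nonneg (a i - r i)).1 hzero i (mem_univ i)
    exact sub_eq_zero.1 (pow_eq_zero_iff two_ne_zero |>.1 this)
  · simpa [h] using sum_nonneg fun i _ => sq_nonneg (α i - r i)

section Lagrangian

variable {ι κ : Type*} [Fintype ι] [Fintype κ] (l0 l1 l2 : ℝ) (X : Matrix ι κ ℝ) (y : ι → ℝ)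

noncomputable def primalObjective (β : κ → ℝ) : ℝ :=
  (1 / 2) * (∑ i, (y i - ∑ j, X i j * β j) ^ 2)
    + l1 * (∑ j, |β j|) + l2 * (∑ j, (β j) ^ 2)
    + l0 * ((Finset.univ.filter fun j => β j ≠ 0).card : ℝ)

noncomputable def lagrangian (β : κ → ℝ) (α : ι → ℝ) : ℝ :=
  (∑ i, α i * ∑ j, X i j * β j)
    - (1 / 2) * (∑ i, (α i) ^ 2) - (∑ i, y i * α i)
    + l0 * ((Finset.univ.filter fun j => β j ≠ 0).card : ℝ)
    + l1 * (∑ j, |β j|)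
    + l2 * (∑ j, (β j) ^ 2)

lemma lagrangian_eq_primalObjective_sub (β : κ → ℝ) (α : ι → ℝ) :
    lagrangian l0 l1 l2 X y β α = primalObjective l0 l1 l2 X y β
      - (1 / 2) * ∑ i, (α i - (∑ j, X i j * β j - y i)) ^ 2 := by
  have hexpand : ∀ i, (α i - (∑ j, X i j * β j - y i)) ^ 2 = (y i - ∑ j, X i j * β j) ^ 2
      + α i ^ 2 - 2 * (α i * ∑ j, X i j * β j) + 2 * (y i * α i) := fun i => by ring
  simp only [lagrangian, primalObjective, hexpand, sum_add_distrib, sum_sub_distrib, ← mul_sum]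
  ring

lemma lagrangian_eq_sum_scalarObjective (hl2 : l2 ≠ 0) (β : κ → ℝ) (α : ι → ℝ) :
    lagrangian l0 l1 l2 X y β α =
      ∑ j, scalarObjective l0 l1 l2 (-(∑ i, X i j * α i) / (2 * l2)) (β j)
        - (1 / 2) * ∑ i, α i ^ 2 - ∑ i, y i * α i := by
  have hcard : ((univ.filter fun j => β j ≠ 0).card : ℝ) = ∑ j, if β j = 0 then 0 else 1 := by
    simp [card_filter, ite_not]
  have hswap : ∑ i, α i * ∑ j, X i j * β j = ∑ j, (∑ i, X i j * α i) * β j := by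
    simp only [mul_sum, sum_mul]
    rw [sum_comm]
    exact sum_congr rfl fun j _ => sum_congr rfl fun i _ => by ring
  have hterm : ∀ j, scalarObjective l0 l1 l2 (-(∑ i, X i j * α i) / (2 * l2)) (β j) =
      (∑ i, X i j * α i) * β j + l0 * (if β j = 0 then 0 else 1) + l1 * |β j| + l2 * β j ^ 2 := by
    intro j
    rw [scalarObjective]
    field_simp
    ring
  rw [lagrangian, hcard, hswap, sum_congr rfl fun j _ => hterm j]
  simp only [sum_add_distrib, mul_sum]
  ring

lemma lagrangian_le_primalObjective (β : κ → ℝ) (α : ι → ℝ) :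
    lagrangian l0 l1 l2 X y β α ≤ primalObjective l0 l1 l2 X y β := by
  rw [lagrangian_eq_primalObjective_sub]
  have := sum_nonneg fun i (_ : i ∈ univ) => sq_nonneg (α i - (∑ j, X i j * β j - y i))
  linarith

end Lagrangian

/-- (β̄, ᾱ) is a saddle point of the square-loss Lagrangian L iff
(a) β̄ minimizes P; (b) ᾱ = Xβ̄ − y; (c) the link condition holds for every j. -/
theorem statement_9 (l0 l1 l2 : ℝ) (hl0 : 0 < l0) (hl1 : 0 < l1) (hl2 : 0 < l2)
    (n p : ℕ) (X : Matrix (Fin n) (Fin p) ℝ) (y : Fin n → ℝ)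
    (P : (Fin p → ℝ) → ℝ)
    (hP : ∀ β : Fin p → ℝ, P β =
      (1 / 2) * (∑ i, (y i - ∑ j, X i j * β j) ^ 2)
        + l1 * (∑ j, |β j|) + l2 * (∑ j, (β j) ^ 2)
        + l0 * ((Finset.univ.filter fun j => β j ≠ 0).card : ℝ))
    (L : (Fin p → ℝ) → (Fin n → ℝ) → ℝ)
    (hL : ∀ (β : Fin p → ℝ) (α : Fin n → ℝ), L β α =
      (∑ i, α i * ∑ j, X i j * β j)
        - (1 / 2) * (∑ i, (α i) ^ 2) - (∑ i, y i * α i)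
        + l0 * ((Finset.univ.filter fun j => β j ≠ 0).card : ℝ)
        + l1 * (∑ j, |β j|)
        + l2 * (∑ j, (β j) ^ 2))
    (η : (Fin n → ℝ) → Fin p → ℝ)
    (hη : ∀ (α : Fin n → ℝ) (j : Fin p), η α j = -(∑ i, X i j * α i) / (2 * l2))
    (βbar : Fin p → ℝ) (αbar : Fin n → ℝ) :
    ((∀ α : Fin n → ℝ, L βbar α ≤ L βbar αbar) ∧
     (∀ β : Fin p → ℝ, L βbar αbar ≤ L β αbar)) ↔
      ((∀ β : Fin p → ℝ, P βbar ≤ P β) ∧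
       (∀ i, αbar i = (∑ j, X i j * βbar j) - y i) ∧
       (∀ j, (βbar j = 0 ∧ |η αbar j| ≤ (2 * Real.sqrt (l0 * l2) + l1) / (2 * l2)) ∨
         (βbar j = Real.sign (η αbar j) * (|η αbar j| - l1 / (2 * l2)) ∧
           (2 * Real.sqrt (l0 * l2) + l1) / (2 * l2) ≤ |η αbar j|))) := by
  obtain rfl : P = primalObjective l0 l1 l2 X y := funext hP
  obtain rfl : L = lagrangian l0 l1 l2 X y := funext fun β => funext (hL β)
  have hαmax : (∀ α, lagrangian l0 l1 l2 X y βbar α ≤ lagrangian l0 l1 l2 X y βbar αbar) ↔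
      ∀ i, αbar i = ∑ j, X i j * βbar j - y i := by
    simp only [lagrangian_eq_primalObjective_sub, sub_le_sub_iff_left,
      mul_le_mul_iff_right₀ (one_half_pos : (0 : ℝ) < 1 / 2)]
    exact forall_sum_sq_sub_le_iff _ _
  have hβmin : (∀ β, lagrangian l0 l1 l2 X y βbar αbar ≤ lagrangian l0 l1 l2 X y β αbar) ↔
      ∀ j t, scalarObjective l0 l1 l2 (η αbar j) (βbar j) ≤
        scalarObjective l0 l1 l2 (η αbar j) t := by
    simp only [lagrangian_eq_sum_scalarObjective _ _ _ _ _ hl2.ne', ← hη, sub_le_sub_iff_right]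
    exact forall_sum_le_sum_iff _ _
  have hlink := fun j => scalarObjective_minimizer_iff hl0 hl1.le hl2 (η αbar j) (βbar j)
  constructor
  · rintro ⟨hα, hβ⟩
    refine ⟨fun β => ?_, hαmax.1 hα, fun j => (hlink j).1 (hβmin.1 hβ j)⟩
    calc primalObjective l0 l1 l2 X y βbar = lagrangian l0 l1 l2 X y βbar αbar := by
          simp [lagrangian_eq_primalObjective_sub, hαmax.1 hα]
      _ ≤ lagrangian l0 l1 l2 X y β αbar := hβ β
      _ ≤ primalObjective l0 l1 l2 X y β := lagrangian_le_primalObjective _ _ _ _ _ β αbar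
  · rintro ⟨-, hres, hc⟩
    exact ⟨hαmax.2 hres, hβmin.2 fun j => (hlink j).2 (hc j)⟩
end

section
/- For the square-loss Lagrangian L, the minimax equality sup_{α ∈ ℝⁿ} inf_{β ∈ ℝᵖ} L(β, α) = inf_{β ∈ ℝᵖ} sup_{α ∈ ℝⁿ} L(β, α) (as an equality of extended real numbers) holds if and only if there exists a saddle point (β̄, ᾱ) ∈ ℝᵖ × ℝⁿ of L. -/
/-!
If the dual function `α ↦ ⨅ β, L β α` attains its supremum at `ᾱ` and the primal function
`β ↦ ⨆ α, L β α` attains its infimum at `β̄`, then the minimax equality holds exactly when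
`(β̄, ᾱ)` is a saddle point; so it suffices that both outer extrema are attained.
The dual function is an infimum of continuous functions, hence upper semicontinuous, it is
nonnegative at `0` and negative far out since `L 0 α ≤ -‖α‖² / 4 + ‖y‖²`. The primal function
is a supremum of lower semicontinuous functions (`‖β‖₀` is lower semicontinuous), it is at most
`‖y‖² / 2` at `0` and coercive since `L β 0 ≥ λ₁ ‖β‖₁`.
-/

open Set Filter Topology Finset

section Saddle

variable {E F β : Type*}

theorem isSaddlePointOn_univ_iff [Preorder β] {f : E → F → β} {a : E} {b : F} :
    IsSaddlePointOn univ univ f a b ↔ (∀ y, f a y ≤ f a b) ∧ ∀ x, f a b ≤ f x b :=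
  ⟨fun h => ⟨fun y => h a (mem_univ a) y (mem_univ y), fun x => h x (mem_univ x) b (mem_univ b)⟩,
    fun h x _ y _ => (h.1 y).trans (h.2 x)⟩

theorem iSup_iInf_eq_iInf_iSup_iff_exists_isSaddlePointOn [CompleteLinearOrder β]
    {f : E → F → β} (hdual : ∃ b, ⨅ x, f x b = ⨆ y, ⨅ x, f x y)
    (hprimal : ∃ a, ⨆ y, f a y = ⨅ x, ⨆ y, f x y) :
    (⨆ y, ⨅ x, f x y) = ⨅ x, ⨆ y, f x y ↔ ∃ a b, IsSaddlePointOn univ univ f a b := by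
  constructor
  · intro h
    obtain ⟨b, hb⟩ := hdual
    obtain ⟨a, ha⟩ := hprimal
    refine ⟨a, b, (isSaddlePointOn_iff' (mem_univ a) (mem_univ b)).2 ?_⟩
    simp only [iSup_univ, iInf_univ]
    rw [ha, hb, h]
  · rintro ⟨a, b, h⟩
    obtain ⟨h₁, h₂⟩ := isSaddlePointOn_value (mem_univ a) (mem_univ b) h
    simp only [iSup_univ, iInf_univ] at h₁ h₂
    rw [h₁, h₂]

end Saddle

section Semicontinuity

variable {α β : Type*} [TopologicalSpace α] [LinearOrder β] {f : α → β}

theorem LowerSemicontinuous.exists_forall_le' (hf : LowerSemicontinuous f) (x₀ : α)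
    (h : ∀ᶠ x in cocompact α, f x₀ ≤ f x) : ∃ a, ∀ x, f a ≤ f x := by
  obtain ⟨K, hK, hKc⟩ := mem_cocompact.1 h
  obtain ⟨a, -, ha⟩ := (hf.lowerSemicontinuousOn _).exists_isMinOn (insert_nonempty x₀ K)
    (hK.insert x₀)
  refine ⟨a, fun x => ?_⟩
  by_cases hx : x ∈ insert x₀ K
  · exact ha hx
  · exact (ha (mem_insert x₀ K)).trans (hKc fun hxK => hx (mem_insert_of_mem x₀ hxK))

theorem UpperSemicontinuous.exists_forall_ge' (hf : UpperSemicontinuous f) (x₀ : α)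
    (h : ∀ᶠ x in cocompact α, f x ≤ f x₀) : ∃ a, ∀ x, f x ≤ f a :=
  LowerSemicontinuous.exists_forall_le' (β := βᵒᵈ) hf x₀ h

theorem lowerSemicontinuous_card_filter_ne_zero {ι M : Type*} [Fintype ι] [TopologicalSpace M]
    [T1Space M] [Zero M] [DecidableEq M] :
    LowerSemicontinuous fun x : ι → M => ((univ.filter fun j => x j ≠ 0).card : ℝ) := by
  have hsum : (fun x : ι → M => ((univ.filter fun j => x j ≠ 0).card : ℝ)) =
      fun x => ∑ j, {x : ι → M | x j ≠ 0}.indicator (fun _ => (1 : ℝ)) x := by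
    ext x
    simp [Finset.card_filter, Set.indicator_apply]
  rw [hsum]
  exact lowerSemicontinuous_sum fun j _ =>
    (isOpen_compl_singleton.preimage (continuous_apply j)).lowerSemicontinuous_indicator zero_le_one

end Semicontinuity

section PiNorm

variable {ι : Type*} [Fintype ι]

theorem pi_norm_le_sum_abs (x : ι → ℝ) : ‖x‖ ≤ ∑ i, |x i| :=
  (pi_norm_le_iff_of_nonneg (sum_nonneg fun _ _ => abs_nonneg _)).2 fun i =>
    (Real.norm_eq_abs _).trans_le (single_le_sum (fun j _ => abs_nonneg (x j)) (mem_univ i))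

theorem sq_pi_norm_le_sum_sq (x : ι → ℝ) : ‖x‖ ^ 2 ≤ ∑ i, x i ^ 2 := by
  have h : ‖x‖ ≤ √(∑ i, x i ^ 2) := (pi_norm_le_iff_of_nonneg (Real.sqrt_nonneg _)).2 fun i =>
    Real.abs_le_sqrt (single_le_sum (fun j _ => sq_nonneg (x j)) (mem_univ i))
  exact (Real.le_sqrt (norm_nonneg x) (sum_nonneg fun i _ => sq_nonneg _)).1 h

end PiNorm

section Lagrangian

variable {m k : Type*} [Fintype m] [Fintype k] (l0 l1 l2 : ℝ) (X : Matrix m k ℝ) (y : m → ℝ)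

noncomputable def squareLossLagrangian (β : k → ℝ) (α : m → ℝ) : ℝ :=
  (∑ i, α i * ∑ j, X i j * β j)
    - (1 / 2) * (∑ i, (α i) ^ 2) - (∑ i, y i * α i)
    + l0 * ((Finset.univ.filter fun j => β j ≠ 0).card : ℝ)
    + l1 * (∑ j, |β j|)
    + l2 * (∑ j, (β j) ^ 2)

theorem squareLossLagrangian_zero_left (α : m → ℝ) :
    squareLossLagrangian l0 l1 l2 X y 0 α = ∑ i, (-(1 / 2) * α i ^ 2 - y i * α i) := by
  simp [squareLossLagrangian, mul_sum]

theorem squareLossLagrangian_zero_right (β : k → ℝ) :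
    squareLossLagrangian l0 l1 l2 X y β 0 =
      l0 * ((Finset.univ.filter fun j => β j ≠ 0).card : ℝ) + l1 * ∑ j, |β j| +
        l2 * ∑ j, β j ^ 2 := by
  simp [squareLossLagrangian]

theorem squareLossLagrangian_zero_left_le_half_sum_sq (α : m → ℝ) :
    squareLossLagrangian l0 l1 l2 X y 0 α ≤ (1 / 2) * ∑ i, y i ^ 2 := by
  rw [squareLossLagrangian_zero_left, mul_sum]
  exact sum_le_sum fun i _ => by nlinarith [sq_nonneg (α i + y i)]

theorem squareLossLagrangian_zero_left_le (α : m → ℝ) :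
    squareLossLagrangian l0 l1 l2 X y 0 α ≤ -(1 / 4) * ‖α‖ ^ 2 + ∑ i, y i ^ 2 :=
  calc squareLossLagrangian l0 l1 l2 X y 0 α ≤ ∑ i, (-(1 / 4) * α i ^ 2 + y i ^ 2) := by
        rw [squareLossLagrangian_zero_left]
        exact sum_le_sum fun i _ => by nlinarith [sq_nonneg (α i / 2 + y i)]
    _ = -(1 / 4) * ∑ i, α i ^ 2 + ∑ i, y i ^ 2 := by rw [sum_add_distrib, mul_sum]
    _ ≤ -(1 / 4) * ‖α‖ ^ 2 + ∑ i, y i ^ 2 := by linarith [sq_pi_norm_le_sum_sq α]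

variable {l0 l2} in
theorem mul_sum_abs_le_squareLossLagrangian_zero_right (hl0 : 0 ≤ l0) (hl2 : 0 ≤ l2) (β : k → ℝ) :
    l1 * ∑ j, |β j| ≤ squareLossLagrangian l0 l1 l2 X y β 0 := by
  rw [squareLossLagrangian_zero_right]
  have : 0 ≤ l0 * ((Finset.univ.filter fun j => β j ≠ 0).card : ℝ) := by positivity
  have : 0 ≤ l2 * ∑ j, β j ^ 2 := by positivity
  linarith

theorem continuous_squareLossLagrangian (β : k → ℝ) :
    Continuous (squareLossLagrangian l0 l1 l2 X y β) := by
  unfold squareLossLagrangian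
  fun_prop

variable {l0} in
theorem lowerSemicontinuous_squareLossLagrangian (hl0 : 0 ≤ l0) (α : m → ℝ) :
    LowerSemicontinuous fun β => squareLossLagrangian l0 l1 l2 X y β α := by
  have hcard : LowerSemicontinuous fun β : k → ℝ =>
      l0 * ((Finset.univ.filter fun j => β j ≠ 0).card : ℝ) :=
    (continuous_const_mul l0).comp_lowerSemicontinuous lowerSemicontinuous_card_filter_ne_zero
      (monotone_mul_left_of_nonneg hl0)
  have hrest : Continuous fun β : k → ℝ =>
      (∑ i, α i * ∑ j, X i j * β j) - (1 / 2) * (∑ i, (α i) ^ 2) - (∑ i, y i * α i) +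
        l1 * (∑ j, |β j|) + l2 * (∑ j, (β j) ^ 2) := by
    fun_prop
  have heq : (fun β => squareLossLagrangian l0 l1 l2 X y β α) = fun β =>
      l0 * ((Finset.univ.filter fun j => β j ≠ 0).card : ℝ) +
        ((∑ i, α i * ∑ j, X i j * β j) - (1 / 2) * (∑ i, (α i) ^ 2) - (∑ i, y i * α i) +
          l1 * (∑ j, |β j|) + l2 * (∑ j, (β j) ^ 2)) := by
    funext β
    unfold squareLossLagrangian
    ring
  rw [heq]
  exact hcard.add hrest.lowerSemicontinuous

end Lagrangian

section Attainment

variable {m k : Type*} [Fintype m] [Fintype k] {l0 l1 l2 : ℝ} (X : Matrix m k ℝ) (y : m → ℝ)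

theorem exists_iInf_squareLossLagrangian_eq_iSup_iInf (hl0 : 0 ≤ l0) (hl1 : 0 ≤ l1) (hl2 : 0 ≤ l2) :
    ∃ α₀, ⨅ β, (squareLossLagrangian l0 l1 l2 X y β α₀ : EReal) =
      ⨆ α, ⨅ β, (squareLossLagrangian l0 l1 l2 X y β α : EReal) := by
  set D : (m → ℝ) → EReal := fun α => ⨅ β, (squareLossLagrangian l0 l1 l2 X y β α : EReal)
  have hD : UpperSemicontinuous D := upperSemicontinuous_iInf fun β =>
    (continuous_coe_real_ereal.comp
      (continuous_squareLossLagrangian l0 l1 l2 X y β)).upperSemicontinuous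
  have hD0 : 0 ≤ D 0 := le_iInf fun β => EReal.coe_nonneg.2 <|
    (mul_sum_abs_le_squareLossLagrangian_zero_right l1 X y hl0 hl2 β).trans' (by positivity)
  have hcoercive : ∀ᶠ α in cocompact (m → ℝ), D α ≤ D 0 := by
    set Y := ∑ i, y i ^ 2
    filter_upwards [tendsto_norm_cocompact_atTop.eventually_gt_atTop (2 * √Y)] with α hα
    have hL : squareLossLagrangian l0 l1 l2 X y 0 α ≤ 0 := by
      have hY : √Y ^ 2 = Y := Real.sq_sqrt (sum_nonneg fun i _ => sq_nonneg (y i))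
      nlinarith [squareLossLagrangian_zero_left_le l0 l1 l2 X y α, Real.sqrt_nonneg Y]
    exact (iInf_le _ 0).trans ((EReal.coe_nonpos.2 hL).trans hD0)
  obtain ⟨α₀, hα₀⟩ := hD.exists_forall_ge' 0 hcoercive
  exact ⟨α₀, le_antisymm (le_iSup D α₀) (iSup_le hα₀)⟩

theorem exists_iSup_squareLossLagrangian_eq_iInf_iSup (hl0 : 0 ≤ l0) (hl1 : 0 < l1) (hl2 : 0 ≤ l2) :
    ∃ β₀, ⨆ α, (squareLossLagrangian l0 l1 l2 X y β₀ α : EReal) =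
      ⨅ β, ⨆ α, (squareLossLagrangian l0 l1 l2 X y β α : EReal) := by
  set P : (k → ℝ) → EReal := fun β => ⨆ α, (squareLossLagrangian l0 l1 l2 X y β α : EReal)
  have hP : LowerSemicontinuous P := lowerSemicontinuous_iSup fun α =>
    continuous_coe_real_ereal.comp_lowerSemicontinuous
      (lowerSemicontinuous_squareLossLagrangian l1 l2 X y hl0 α) EReal.coe_strictMono.monotone
  set Y := ∑ i, y i ^ 2
  have hP0 : P 0 ≤ ((1 / 2 * Y : ℝ) : EReal) := iSup_le fun α =>
    EReal.coe_le_coe_iff.2 (squareLossLagrangian_zero_left_le_half_sum_sq l0 l1 l2 X y α)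
  have hcoercive : ∀ᶠ β in cocompact (k → ℝ), P 0 ≤ P β := by
    filter_upwards [tendsto_norm_cocompact_atTop.eventually_gt_atTop (Y / (2 * l1))] with β hβ
    refine hP0.trans (le_iSup_of_le 0 (EReal.coe_le_coe_iff.2 ?_))
    have hβ' : Y / 2 ≤ l1 * ‖β‖ := by
      rw [div_lt_iff₀ (by positivity)] at hβ
      linarith
    linarith [mul_sum_abs_le_squareLossLagrangian_zero_right l1 X y hl0 hl2 β,
      mul_le_mul_of_nonneg_left (pi_norm_le_sum_abs β) hl1.le]
  obtain ⟨β₀, hβ₀⟩ := hP.exists_forall_le' 0 hcoercive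
  exact ⟨β₀, le_antisymm (le_iInf hβ₀) (iInf_le P β₀)⟩

end Attainment

/-- For the square-loss Lagrangian L, the minimax equality
sup_α inf_β L(β,α) = inf_β sup_α L(β,α) (in the extended reals) holds iff
there exists a saddle point of L. -/
theorem statement_10 (l0 l1 l2 : ℝ) (hl0 : 0 < l0) (hl1 : 0 < l1) (hl2 : 0 < l2)
    (n p : ℕ) (X : Matrix (Fin n) (Fin p) ℝ) (y : Fin n → ℝ)
    (L : (Fin p → ℝ) → (Fin n → ℝ) → ℝ)
    (hL : ∀ (β : Fin p → ℝ) (α : Fin n → ℝ), L β α =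
      (∑ i, α i * ∑ j, X i j * β j)
        - (1 / 2) * (∑ i, (α i) ^ 2) - (∑ i, y i * α i)
        + l0 * ((Finset.univ.filter fun j => β j ≠ 0).card : ℝ)
        + l1 * (∑ j, |β j|)
        + l2 * (∑ j, (β j) ^ 2)) :
    ((⨆ α : Fin n → ℝ, ⨅ β : Fin p → ℝ, ((L β α : ℝ) : EReal)) =
      ⨅ β : Fin p → ℝ, ⨆ α : Fin n → ℝ, ((L β α : ℝ) : EReal)) ↔
      (∃ (βbar : Fin p → ℝ) (αbar : Fin n → ℝ),
        (∀ α : Fin n → ℝ, L βbar α ≤ L βbar αbar) ∧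
        (∀ β : Fin p → ℝ, L βbar αbar ≤ L β αbar)) := by
  obtain rfl : L = squareLossLagrangian l0 l1 l2 X y := funext₂ hL
  rw [iSup_iInf_eq_iInf_iSup_iff_exists_isSaddlePointOn
    (exists_iInf_squareLossLagrangian_eq_iSup_iInf X y hl0.le hl1.le hl2.le)
    (exists_iSup_squareLossLagrangian_eq_iInf_iSup X y hl0.le hl1 hl2.le)]
  simp only [isSaddlePointOn_univ_iff, EReal.coe_le_coe_iff]
end

section
/- (Safe rule, active features.) Suppose β̄ ∈ ℝᵖ minimizes P over ℝᵖ, ᾱ = Xβ̄ − y, and the link condition holds: for every j, either β̄_j = 0 and |η_j(ᾱ)| ≤ η₀, or β̄_j = sign(η_j(ᾱ))·(|η_j(ᾱ)| − λ₁/(2λ₂)) and |η_j(ᾱ)| ≥ η₀. Then for every α ∈ ℝⁿ and β ∈ ℝᵖ with r = √(2·(P(β) − D(α))), if a coordinate j satisfies |x₍·j₎ᵀα| − ‖x₍·j₎‖·r > 2√(λ₀λ₂) + λ₁, then β̄_j ≠ 0. -/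
/-!
The dual objective is `1`-strongly concave and weak duality holds with this curvature:
for every `β`, `D α + ½ ‖α - (Xβ - y)‖² ≤ P β`, which is the Fenchel–Young inequality
`Φ t ≤ b t + h b` for the separable penalty `h b = λ₁ |b| + λ₂ b² + λ₀ [b ≠ 0]`, summed over
coordinates. Applied at the minimizer `β̄` this puts `ᾱ = Xβ̄ - y` in the ball of radius
`r = √(2 (P β - D α))` around any `α`, so by Cauchy–Schwarz `|x_jᵀ ᾱ|` exceeds
`2 √(λ₀ λ₂) + λ₁`, and the link condition then forces `β̄_j ≠ 0`.
-/

open Finset Matrix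

theorem half_sum_sq_sub_eq {ι : Type*} [Fintype ι] (y u α : ι → ℝ) :
    (1 / 2) * ∑ i, (y i - u i) ^ 2
      = (1 / 2) * ∑ i, (α i - (u i - y i)) ^ 2 - (1 / 2) * ∑ i, α i ^ 2
        - ∑ i, y i * α i + ∑ i, α i * u i := by
  simp only [mul_sum, ← sum_sub_distrib, ← sum_add_distrib]
  exact sum_congr rfl fun i _ => by ring

theorem abs_sum_mul_sub_le {ι : Type*} [Fintype ι] (x a b : ι → ℝ) {r : ℝ}
    (hr : √(∑ i, (a i - b i) ^ 2) ≤ r) :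
    |∑ i, x i * a i| - √(∑ i, x i ^ 2) * r ≤ |∑ i, x i * b i| := by
  have hcs : |∑ i, x i * (a i - b i)| ≤ √(∑ i, x i ^ 2) * r := calc
    |∑ i, x i * (a i - b i)| ≤ √(∑ i, x i ^ 2) * √(∑ i, (a i - b i) ^ 2) := by
      rw [← Real.sqrt_sq_eq_abs, ← Real.sqrt_mul (sum_nonneg fun i _ => sq_nonneg _)]
      exact Real.sqrt_le_sqrt (sum_mul_sq_le_sq_mul_sq _ _ _)
    _ ≤ √(∑ i, x i ^ 2) * r := mul_le_mul_of_nonneg_left hr (Real.sqrt_nonneg _)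
  have hsplit : ∑ i, x i * (a i - b i) = ∑ i, x i * a i - ∑ i, x i * b i := by
    simp only [mul_sub, sum_sub_distrib]
  rw [hsplit] at hcs
  linarith [abs_sub_abs_le_abs_sub (∑ i, x i * a i) (∑ i, x i * b i)]

namespace L0Screening

variable {ι κ : Type*} [Fintype ι] [Fintype κ] (l0 l1 l2 : ℝ)

noncomputable def penalty (b : ℝ) : ℝ :=
  l1 * |b| + l2 * b ^ 2 + l0 * if b ≠ 0 then 1 else 0

/-- `conjPenalty t = inf_b (b t + penalty b)`, the function `Φ` of the dual objective. -/
noncomputable def conjPenalty (t : ℝ) : ℝ :=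
  if 2 * √(l0 * l2) + l1 < |t| then l0 - (|t| - l1) ^ 2 / (4 * l2) else 0

noncomputable def primal (X : Matrix ι κ ℝ) (y : ι → ℝ) (β : κ → ℝ) : ℝ :=
  (1 / 2) * (∑ i, (y i - ∑ j, X i j * β j) ^ 2)
    + l1 * (∑ j, |β j|) + l2 * (∑ j, (β j) ^ 2)
    + l0 * ((univ.filter fun j => β j ≠ 0).card : ℝ)

noncomputable def dual (X : Matrix ι κ ℝ) (y α : ι → ℝ) : ℝ :=
  -(1 / 2) * (∑ i, (α i) ^ 2) - (∑ i, y i * α i) + ∑ j, conjPenalty l0 l1 l2 (∑ i, X i j * α i)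

variable {l0 l1 l2}

theorem conjPenalty_le_mul_add_penalty (hl0 : 0 ≤ l0) (hl2 : 0 < l2) (b t : ℝ) :
    conjPenalty l0 l1 l2 t ≤ b * t + penalty l0 l1 l2 b := by
  have hbt : -(|b| * |t|) ≤ b * t := by rw [← abs_mul]; exact neg_abs_le _
  have hsq : √(l0 * l2) ^ 2 = l0 * l2 := Real.sq_sqrt (by positivity)
  have hsqrt := Real.sqrt_nonneg (l0 * l2)
  unfold conjPenalty penalty
  split_ifs with ht hb hb
  · have amgm : |b| * (|t| - l1) - l2 * b ^ 2 ≤ (|t| - l1) ^ 2 / (4 * l2) := by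
      rw [le_div_iff₀ (by positivity), ← sq_abs b]
      nlinarith [sq_nonneg (|t| - l1 - 2 * l2 * |b|)]
    linarith
  · have : l0 ≤ (|t| - l1) ^ 2 / (4 * l2) := by
      rw [le_div_iff₀ (by positivity)]
      nlinarith
    simp only [not_not.mp hb, abs_zero]
    linarith
  · have hsquare : l2 * (l2 * b ^ 2 - 2 * √(l0 * l2) * |b| + l0)
        = (l2 * |b| - √(l0 * l2)) ^ 2 := by
      rw [sub_sq, hsq, mul_pow, sq_abs]; ring
    have : 0 ≤ l2 * b ^ 2 - 2 * √(l0 * l2) * |b| + l0 :=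
      nonneg_of_mul_nonneg_right (hsquare ▸ sq_nonneg _) hl2
    nlinarith [abs_nonneg b]
  · simp [not_not.mp hb]

theorem primal_eq_add_sum_penalty (X : Matrix ι κ ℝ) (y : ι → ℝ) (β : κ → ℝ) :
    primal l0 l1 l2 X y β
      = (1 / 2) * (∑ i, (y i - ∑ j, X i j * β j) ^ 2) + ∑ j, penalty l0 l1 l2 (β j) := by
  simp only [primal, penalty, card_filter, Nat.cast_sum, Nat.cast_ite, Nat.cast_one,
    Nat.cast_zero, sum_add_distrib, mul_sum]
  ring

theorem dual_add_half_sum_sq_le_primal (hl0 : 0 ≤ l0) (hl2 : 0 < l2) (X : Matrix ι κ ℝ)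
    (y α : ι → ℝ) (β : κ → ℝ) :
    dual l0 l1 l2 X y α + (1 / 2) * ∑ i, (α i - ((∑ j, X i j * β j) - y i)) ^ 2
      ≤ primal l0 l1 l2 X y β := by
  have hswap : ∑ i, α i * ∑ j, X i j * β j = ∑ j, β j * ∑ i, X i j * α i := by
    change α ⬝ᵥ (X *ᵥ β) = β ⬝ᵥ (Xᵀ *ᵥ α)
    rw [dotProduct_mulVec, dotProduct_comm, mulVec_transpose]
  have hresidual := half_sum_sq_sub_eq y (fun i => ∑ j, X i j * β j) α
  have hfenchel : ∑ j, conjPenalty l0 l1 l2 (∑ i, X i j * α i)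
      ≤ ∑ j, β j * (∑ i, X i j * α i) + ∑ j, penalty l0 l1 l2 (β j) := by
    rw [← sum_add_distrib]
    exact sum_le_sum fun j _ => conjPenalty_le_mul_add_penalty hl0 hl2 _ _
  rw [primal_eq_add_sum_penalty, dual, hresidual, hswap]
  linarith

theorem sqrt_sum_sq_sub_residual_le_sqrt_gap (hl0 : 0 ≤ l0) (hl2 : 0 < l2) {X : Matrix ι κ ℝ}
    {y : ι → ℝ} {βbar : κ → ℝ} (hmin : ∀ β, primal l0 l1 l2 X y βbar ≤ primal l0 l1 l2 X y β)
    (α : ι → ℝ) (β : κ → ℝ) :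
    √(∑ i, (α i - ((∑ j, X i j * βbar j) - y i)) ^ 2)
      ≤ √(2 * (primal l0 l1 l2 X y β - dual l0 l1 l2 X y α)) :=
  Real.sqrt_le_sqrt <| by
    linarith [dual_add_half_sum_sq_le_primal (l1 := l1) hl0 hl2 X y α βbar, hmin β]

theorem ne_zero_of_link {b e c : ℝ} (hc : 0 ≤ c) (hl1 : 0 ≤ l1) (hl2 : 0 < l2)
    (hlink : (b = 0 ∧ |e| ≤ (c + l1) / (2 * l2)) ∨
      (b = Real.sign e * (|e| - l1 / (2 * l2)) ∧ (c + l1) / (2 * l2) ≤ |e|))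
    (he : (c + l1) / (2 * l2) < |e|) : b ≠ 0 := by
  rcases hlink with ⟨-, hle⟩ | ⟨rfl, -⟩
  · exact absurd he hle.not_gt
  · have hl1e : l1 / (2 * l2) < |e| :=
      lt_of_le_of_lt (div_le_div_of_nonneg_right (by linarith) (by positivity)) he
    have he0 : e ≠ 0 := abs_pos.mp (lt_of_le_of_lt (by positivity) hl1e)
    exact mul_ne_zero (mt Real.sign_eq_zero_iff.mp he0) (sub_pos.mpr hl1e).ne'

end L0Screening

/-- STATEMENT 13: (Safe rule, active features.) If β̄ minimizes P,
ᾱ = Xβ̄ − y and the link condition holds, then for all α, β with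
r = √(2(P(β) − D(α))), if |x₍·j₎ᵀα| − ‖x₍·j₎‖·r > 2√(λ₀λ₂) + λ₁ then β̄_j ≠ 0. -/
theorem statement_14 (l0 l1 l2 : ℝ) (hl0 : 0 < l0) (hl1 : 0 < l1) (hl2 : 0 < l2)
    (n p : ℕ) (X : Matrix (Fin n) (Fin p) ℝ) (y : Fin n → ℝ)
    (Φ : ℝ → ℝ)
    (hΦ : ∀ t : ℝ, Φ t =
      if 2 * Real.sqrt (l0 * l2) + l1 < |t| then l0 - (|t| - l1) ^ 2 / (4 * l2)
      else 0)
    (P : (Fin p → ℝ) → ℝ)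
    (hP : ∀ β : Fin p → ℝ, P β =
      (1 / 2) * (∑ i, (y i - ∑ j, X i j * β j) ^ 2)
        + l1 * (∑ j, |β j|) + l2 * (∑ j, (β j) ^ 2)
        + l0 * ((Finset.univ.filter fun j => β j ≠ 0).card : ℝ))
    (D : (Fin n → ℝ) → ℝ)
    (hD : ∀ α : Fin n → ℝ, D α =
      -(1 / 2) * (∑ i, (α i) ^ 2) - (∑ i, y i * α i)
        + ∑ j, Φ (∑ i, X i j * α i))
    (η : (Fin n → ℝ) → Fin p → ℝ)
    (hη : ∀ (α : Fin n → ℝ) (j : Fin p), η α j = -(∑ i, X i j * α i) / (2 * l2))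
    (βbar : Fin p → ℝ) (αbar : Fin n → ℝ)
    (hmin : ∀ β : Fin p → ℝ, P βbar ≤ P β)
    (hαbar : ∀ i, αbar i = (∑ j, X i j * βbar j) - y i)
    (hlink : ∀ j,
      (βbar j = 0 ∧ |η αbar j| ≤ (2 * Real.sqrt (l0 * l2) + l1) / (2 * l2)) ∨
      (βbar j = Real.sign (η αbar j) * (|η αbar j| - l1 / (2 * l2)) ∧
        (2 * Real.sqrt (l0 * l2) + l1) / (2 * l2) ≤ |η αbar j|)) :
    ∀ (α : Fin n → ℝ) (β : Fin p → ℝ) (r : ℝ),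
      r = Real.sqrt (2 * (P β - D α)) →
      ∀ j : Fin p,
        2 * Real.sqrt (l0 * l2) + l1 <
          |∑ i, X i j * α i| - Real.sqrt (∑ i, (X i j) ^ 2) * r →
        βbar j ≠ 0 := by
  intro α β r hr j hj
  obtain rfl : Φ = L0Screening.conjPenalty l0 l1 l2 := funext hΦ
  obtain rfl : P = L0Screening.primal l0 l1 l2 X y := funext hP
  obtain rfl : D = L0Screening.dual l0 l1 l2 X y := funext hD
  have hball := L0Screening.sqrt_sum_sq_sub_residual_le_sqrt_gap hl0.le hl2 hmin α β
  simp only [← hαbar, ← hr] at hball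
  have hbar : 2 * √(l0 * l2) + l1 < |∑ i, X i j * αbar i| := by
    linarith [abs_sum_mul_sub_le (fun i => X i j) α αbar hball]
  refine L0Screening.ne_zero_of_link (by positivity) hl1.le hl2 (hlink j) ?_
  rw [hη, abs_div, abs_neg, abs_of_pos (by positivity : (0 : ℝ) < 2 * l2)]
  exact div_lt_div_of_pos_right hbar (by positivity)
end

section
/- (Support stability of the thresholded primal map.) Let ᾱ ∈ ℝⁿ satisfy |η_j(ᾱ)| ≠ η₀ and x₍·j₎ ≠ 0 for every j ∈ {1,…,p}, and set β̄_j = 𝔅(η_j(ᾱ)). Define δ̄ = 2λ₂ · min over j of d_j, where d_j = (|η_j(ᾱ)| − η₀)/‖x₍·j₎‖ if β̄_j ≠ 0 and d_j = (η₀ − |η_j(ᾱ)|)/‖x₍·j₎‖ if β̄_j = 0. Then δ̄ > 0, and for every α ∈ ℝⁿ with ‖α − ᾱ‖ < δ̄ and every j, 𝔅(η_j(α)) ≠ 0 if and only if β̄_j ≠ 0. -/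
/-!
`𝔅(η) ≠ 0` exactly when `|η| > η₀`, and `‖x₍·j₎‖ d_j` is the distance from `|η_j(ᾱ)|` to `η₀`.
By Cauchy–Schwarz `η_j` is `‖x₍·j₎‖/(2λ₂)`-Lipschitz, so moving `α` by less than `δ̄` moves
every `η_j` by less than that distance, and `|η_j|` stays on the same side of `η₀`.
-/

open Finset

/-- The map `𝔅`, with threshold `t = η₀` and shrinkage `c = λ₁/(2λ₂)`. -/
noncomputable def thresholdMap (t c x : ℝ) : ℝ :=
  if t < |x| then Real.sign x * (|x| - c) else 0

theorem thresholdMap_ne_zero_iff {t c x : ℝ} (ht : 0 ≤ t) (hct : c ≤ t) :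
    thresholdMap t c x ≠ 0 ↔ t < |x| := by
  unfold thresholdMap
  split_ifs with h
  · have hx : x ≠ 0 := abs_pos.mp (ht.trans_lt h)
    simp only [h, iff_true]
    exact mul_ne_zero (mt Real.sign_eq_zero_iff.mp hx) (sub_ne_zero.mpr (hct.trans_lt h).ne')
  · simpa using h

theorem abs_sum_mul_sub_sum_mul_le {ι : Type*} (s : Finset ι) (x a b : ι → ℝ) :
    |∑ i ∈ s, x i * a i - ∑ i ∈ s, x i * b i| ≤
      √(∑ i ∈ s, x i ^ 2) * √(∑ i ∈ s, (a i - b i) ^ 2) := by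
  have hlin : ∑ i ∈ s, x i * a i - ∑ i ∈ s, x i * b i = ∑ i ∈ s, x i * (a i - b i) := by
    simp only [mul_sub, sum_sub_distrib]
  rw [hlin, abs_le]
  constructor
  · have h := Real.sum_mul_le_sqrt_mul_sqrt s x fun i => -(a i - b i)
    simp only [mul_neg, sum_neg_distrib, neg_sq] at h
    linarith
  · exact Real.sum_mul_le_sqrt_mul_sqrt s x _

theorem sqrt_sum_sq_pos_of_exists_ne_zero {ι : Type*} [Fintype ι] {x : ι → ℝ}
    (h : ∃ i, x i ≠ 0) : 0 < √(∑ i, x i ^ 2) := by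
  obtain ⟨i, hi⟩ := h
  exact Real.sqrt_pos.mpr <| sum_pos' (fun i _ => sq_nonneg (x i)) ⟨i, mem_univ i, by positivity⟩

theorem lt_abs_iff_of_abs_sub_lt {t y z : ℝ} (h : |y - z| < |(|z| - t)|) :
    t < |y| ↔ t < |z| := by
  have hyz := abs_sub_abs_le_abs_sub y z
  have hzy := abs_sub_abs_le_abs_sub z y
  rw [abs_sub_comm] at hzy
  rcases le_total t |z| with htz | hzt
  · rw [abs_of_nonneg (sub_nonneg.mpr htz)] at h
    constructor <;> intro <;> linarith
  · rw [abs_of_nonpos (sub_nonpos.mpr hzt)] at h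
    constructor <;> intro <;> linarith

theorem statement_15_general (l0 l1 l2 : ℝ) (hl1 : 0 < l1) (hl2 : 0 < l2)
    (n p : ℕ) (hp : 0 < p) (X : Matrix (Fin n) (Fin p) ℝ)
    (hX : ∀ j : Fin p, ∃ i, X i j ≠ 0)
    (B : ℝ → ℝ)
    (hB : ∀ η : ℝ, B η =
      if (2 * Real.sqrt (l0 * l2) + l1) / (2 * l2) < |η| then
        Real.sign η * (|η| - l1 / (2 * l2))
      else 0)
    (η : (Fin n → ℝ) → Fin p → ℝ)
    (hη : ∀ (α : Fin n → ℝ) (j : Fin p), η α j = -(∑ i, X i j * α i) / (2 * l2))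
    (αbar : Fin n → ℝ)
    (hne : ∀ j, |η αbar j| ≠ (2 * Real.sqrt (l0 * l2) + l1) / (2 * l2))
    (βbar : Fin p → ℝ)
    (hβbar : ∀ j, βbar j = B (η αbar j))
    (d : Fin p → ℝ)
    (hd : ∀ j, d j =
      if βbar j ≠ 0 then
        (|η αbar j| - (2 * Real.sqrt (l0 * l2) + l1) / (2 * l2)) /
          Real.sqrt (∑ i, (X i j) ^ 2)
      else
        ((2 * Real.sqrt (l0 * l2) + l1) / (2 * l2) - |η αbar j|) /
          Real.sqrt (∑ i, (X i j) ^ 2))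
    (δ : ℝ)
    (hδ : δ = 2 * l2 *
      Finset.univ.inf' (Finset.univ_nonempty_iff.mpr (Fin.pos_iff_nonempty.mp hp)) d) :
    0 < δ ∧
      ∀ α : Fin n → ℝ, Real.sqrt (∑ i, (α i - αbar i) ^ 2) < δ →
        ∀ j : Fin p, B (η α j) ≠ 0 ↔ βbar j ≠ 0 := by
  have hl2' : 0 < 2 * l2 := by positivity
  set t := (2 * √(l0 * l2) + l1) / (2 * l2)
  set N : Fin p → ℝ := fun j => √(∑ i, X i j ^ 2)
  have hsupp (y : ℝ) : B y ≠ 0 ↔ t < |y| := by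
    rw [hB y]
    exact thresholdMap_ne_zero_iff (by positivity) <|
      div_le_div_of_nonneg_right (by linarith [Real.sqrt_nonneg (l0 * l2)]) hl2'.le
  have hN (j : Fin p) : 0 < N j := sqrt_sum_sq_pos_of_exists_ne_zero (hX j)
  have hd_margin (j : Fin p) : d j = |(|η αbar j| - t)| / N j := by
    rw [hd j]
    split_ifs with h <;> rw [hβbar j, hsupp] at h
    · rw [abs_of_pos (sub_pos.mpr h)]
    · rw [abs_of_neg (sub_neg.mpr (lt_of_le_of_ne (not_lt.mp h) (hne j))), neg_sub]
  have hm : 0 < univ.inf' (univ_nonempty_iff.mpr (Fin.pos_iff_nonempty.mp hp)) d := by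
    refine (lt_inf'_iff _).mpr fun j _ => ?_
    rw [hd_margin j]
    exact div_pos (abs_pos.mpr (sub_ne_zero.mpr (hne j))) (hN j)
  refine ⟨hδ ▸ by positivity, fun α hα j => ?_⟩
  have hclose : |η α j - η αbar j| < |(|η αbar j| - t)| := calc
    |η α j - η αbar j| = |∑ i, X i j * α i - ∑ i, X i j * αbar i| / (2 * l2) := by
      rw [hη, hη, ← sub_div, neg_sub_neg, abs_div, abs_sub_comm, abs_of_pos hl2']
    _ ≤ N j * √(∑ i, (α i - αbar i) ^ 2) / (2 * l2) := by
      gcongr; exact abs_sum_mul_sub_sum_mul_le _ _ _ _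
    _ < N j * δ / (2 * l2) := by gcongr; exact hN j
    _ ≤ N j * d j := by
      rw [hδ, mul_div_assoc, mul_div_cancel_left₀ _ hl2'.ne']
      gcongr
      exact inf'_le _ (mem_univ j)
    _ = |(|η αbar j| - t)| := by rw [hd_margin j, mul_div_cancel₀ _ (hN j).ne']
  rw [hsupp, hβbar, hsupp]
  exact lt_abs_iff_of_abs_sub_lt hclose

/-- (Support stability of the thresholded primal map.) If every
|η_j(ᾱ)| ≠ η₀ and x₍·j₎ ≠ 0, β̄_j = 𝔅(η_j(ᾱ)), and δ̄ = 2λ₂·min_j d_j where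
d_j = (|η_j(ᾱ)| − η₀)/‖x₍·j₎‖ if β̄_j ≠ 0 and d_j = (η₀ − |η_j(ᾱ)|)/‖x₍·j₎‖
otherwise, then δ̄ > 0 and for every α with ‖α − ᾱ‖ < δ̄ and every j,
𝔅(η_j(α)) ≠ 0 ↔ β̄_j ≠ 0. -/
theorem statement_15 (l0 l1 l2 : ℝ) (hl0 : 0 < l0) (hl1 : 0 < l1) (hl2 : 0 < l2)
    (n p : ℕ) (hp : 0 < p) (X : Matrix (Fin n) (Fin p) ℝ)
    (hX : ∀ j : Fin p, ∃ i, X i j ≠ 0)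
    (B : ℝ → ℝ)
    (hB : ∀ η : ℝ, B η =
      if (2 * Real.sqrt (l0 * l2) + l1) / (2 * l2) < |η| then
        Real.sign η * (|η| - l1 / (2 * l2))
      else 0)
    (η : (Fin n → ℝ) → Fin p → ℝ)
    (hη : ∀ (α : Fin n → ℝ) (j : Fin p), η α j = -(∑ i, X i j * α i) / (2 * l2))
    (αbar : Fin n → ℝ)
    (hne : ∀ j, |η αbar j| ≠ (2 * Real.sqrt (l0 * l2) + l1) / (2 * l2))
    (βbar : Fin p → ℝ)
    (hβbar : ∀ j, βbar j = B (η αbar j))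
    (d : Fin p → ℝ)
    (hd : ∀ j, d j =
      if βbar j ≠ 0 then
        (|η αbar j| - (2 * Real.sqrt (l0 * l2) + l1) / (2 * l2)) /
          Real.sqrt (∑ i, (X i j) ^ 2)
      else
        ((2 * Real.sqrt (l0 * l2) + l1) / (2 * l2) - |η αbar j|) /
          Real.sqrt (∑ i, (X i j) ^ 2))
    (δ : ℝ)
    (hδ : δ = 2 * l2 *
      Finset.univ.inf' (Finset.univ_nonempty_iff.mpr (Fin.pos_iff_nonempty.mp hp)) d) :
    0 < δ ∧
      ∀ α : Fin n → ℝ, Real.sqrt (∑ i, (α i - αbar i) ^ 2) < δ →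
        ∀ j : Fin p, B (η α j) ≠ 0 ↔ βbar j ≠ 0 :=
  statement_15_general l0 l1 l2 hl1 hl2 n p hp X hX B hB η hη αbar hne βbar hβbar d hd δ hδ
end

section
/- (Local Lipschitz estimate for the thresholded primal map.) Let ᾱ ∈ ℝⁿ satisfy |η_j(ᾱ)| ≠ η₀ and x₍·j₎ ≠ 0 for every j ∈ {1,…,p}, set β̄_j = 𝔅(η_j(ᾱ)), let S = {j : β̄_j ≠ 0}, and define δ̄ = 2λ₂ · min over j of d_j, where d_j = (|η_j(ᾱ)| − η₀)/‖x₍·j₎‖ if j ∈ S and d_j = (η₀ − |η_j(ᾱ)|)/‖x₍·j₎‖ if j ∉ S. Then for every α ∈ ℝⁿ with ‖α − ᾱ‖ < δ̄, the vector β(α) defined by β(α)_j = 𝔅(η_j(α)) satisfies ‖β(α) − β̄‖ ≤ (‖X_S‖/(2λ₂))·‖α − ᾱ‖, where X_S is the submatrix of X consisting of the columns indexed by S and ‖X_S‖ is its operator norm (largest singular value). -/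
/-!
On the ball, Cauchy–Schwarz gives `|η_j(α) - η_j(ᾱ)| ≤ ‖x_j‖ ‖α - ᾱ‖ / (2λ₂)`, which is less than
the distance from `|η_j(ᾱ)|` to the threshold `η₀`; so no coordinate crosses the threshold. Off `S`
the coordinate stays `0`; on `S`, `η_j` keeps its sign and `𝔅` is a translation by `∓λ₁/(2λ₂)`
there, so `β(α) - β̄` is `X_Sᵀ(ᾱ - α) / (2λ₂)` on `S` and `0` off it. Finally `‖X_Sᵀ‖ = ‖X_S‖`.
-/

open scoped Classical Matrix

-- `𝔅 = shrinkThreshold η₀ (λ₁ / (2λ₂))`.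
noncomputable def shrinkThreshold (c k t : ℝ) : ℝ :=
  if c < |t| then Real.sign t * (|t| - k) else 0

section
variable {c k s t : ℝ}

lemma shrinkThreshold_eq_zero_of_abs_sub_lt (h : |t - s| < c - |s|) :
    shrinkThreshold c k t = 0 := by
  have : |t| < c := by linarith [abs_sub_abs_le_abs_sub t s]
  rw [shrinkThreshold, if_neg this.not_gt]

lemma shrinkThreshold_sub_of_abs_sub_lt (hc : 0 ≤ c) (h : |t - s| < |s| - c) :
    shrinkThreshold c k t - shrinkThreshold c k s = t - s := by
  have hs : c < |s| := by linarith [abs_nonneg (t - s)]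
  have ht : c < |t| := by linarith [abs_sub_abs_le_abs_sub s t, abs_sub_comm s t]
  rw [shrinkThreshold, shrinkThreshold, if_pos hs, if_pos ht]
  rcases lt_or_gt_of_ne (abs_pos.1 (hc.trans_lt hs)) with hs0 | hs0
  · have ht0 : t < 0 := by rw [abs_of_neg hs0] at h; linarith [le_abs_self (t - s)]
    rw [Real.sign_of_neg hs0, Real.sign_of_neg ht0, abs_of_neg hs0, abs_of_neg ht0]; ring
  · have ht0 : 0 < t := by rw [abs_of_pos hs0] at h; linarith [neg_abs_le (t - s)]
    rw [Real.sign_of_pos hs0, Real.sign_of_pos ht0, abs_of_pos hs0, abs_of_pos ht0]; ring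

end

lemma abs_sum_mul_le_sqrt_mul_sqrt {ι : Type*} [Fintype ι] (f g : ι → ℝ) :
    |∑ i, f i * g i| ≤ √(∑ i, f i ^ 2) * √(∑ i, g i ^ 2) := by
  rw [abs_le]
  refine ⟨?_, Real.sum_mul_le_sqrt_mul_sqrt _ _ _⟩
  have h := Real.sum_mul_le_sqrt_mul_sqrt Finset.univ (fun i => -f i) g
  simp only [neg_mul, Finset.sum_neg_distrib, neg_sq] at h
  linarith

lemma abs_sum_mul_div_lt_of_sqrt_sum_sq_lt {ι : Type*} [Fintype ι] {a m : ℝ} (ha : 0 < a)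
    (x w : ι → ℝ) (h : √(∑ i, w i ^ 2) < a * (m / √(∑ i, x i ^ 2))) :
    |∑ i, x i * w i| / a < m := by
  rcases (Real.sqrt_nonneg (∑ i, x i ^ 2)).eq_or_lt with hx | hx
  · -- `m / 0 = 0`, so `h` says that a square root is negative
    rw [← hx, div_zero, mul_zero] at h
    exact absurd h (Real.sqrt_nonneg _).not_gt
  rw [mul_div_assoc', lt_div_iff₀ hx] at h
  calc |∑ i, x i * w i| / a ≤ √(∑ i, x i ^ 2) * √(∑ i, w i ^ 2) / a := by
        gcongr; exact abs_sum_mul_le_sqrt_mul_sqrt x w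
    _ < m := by rw [div_lt_iff₀ ha]; linarith

lemma sqrt_sum_sq_eq_norm_toLp {ι : Type*} [Fintype ι] (f : ι → ℝ) :
    √(∑ i, f i ^ 2) = ‖WithLp.toLp 2 f‖ := by
  simp [EuclideanSpace.norm_eq]

open scoped Matrix.Norms.L2Operator in
lemma sqrt_sum_transpose_mulVec_sq_le {m k : Type*} [Fintype m] [Fintype k] [DecidableEq m]
    [DecidableEq k] (A : Matrix m k ℝ) {c : ℝ} (hc : 0 ≤ c)
    (hA : ∀ v, √(∑ i, (A *ᵥ v) i ^ 2) ≤ c * √(∑ j, v j ^ 2)) (u : m → ℝ) :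
    √(∑ j, (Aᵀ *ᵥ u) j ^ 2) ≤ c * √(∑ i, u i ^ 2) := by
  have hnorm : ‖A‖ ≤ c := by
    refine ContinuousLinearMap.opNorm_le_bound _ hc fun v => ?_
    simpa [sqrt_sum_sq_eq_norm_toLp, Matrix.toLpLin_apply] using hA v.ofLp
  have := (Aᴴ).l2_opNorm_mulVec (WithLp.toLp 2 u)
  rw [Matrix.l2_opNorm_conjTranspose, Matrix.conjTranspose_eq_transpose_of_trivial] at this
  simp only [sqrt_sum_sq_eq_norm_toLp]
  calc _ ≤ ‖A‖ * ‖WithLp.toLp 2 u‖ := this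
    _ ≤ _ := by gcongr

lemma sum_ite_sq_eq_sum_subtype {ι : Type*} [Fintype ι] (p : ι → Prop) [DecidablePred p]
    (f : ι → ℝ) : ∑ j, (if p j then f j else 0) ^ 2 = ∑ j : {j // p j}, f j ^ 2 := by
  simp_rw [ite_pow, zero_pow two_ne_zero]
  rw [← Finset.sum_filter]
  exact Finset.sum_subtype _ (by simp) _

lemma sqrt_sum_sq_ite_transpose_le {m ι : Type*} [Fintype m] [Fintype ι] [DecidableEq m]
    (p : ι → Prop) [DecidablePred p] (X : Matrix m ι ℝ) {c : ℝ} (hc : 0 ≤ c)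
    (hX : ∀ v : {j // p j} → ℝ, √(∑ i, (∑ j, X i j.1 * v j) ^ 2) ≤ c * √(∑ j, v j ^ 2))
    (u : m → ℝ) :
    √(∑ j, (if p j then ∑ i, X i j * u i else 0) ^ 2) ≤ c * √(∑ i, u i ^ 2) := by
  rw [sum_ite_sq_eq_sum_subtype]
  exact sqrt_sum_transpose_mulVec_sq_le (X.submatrix id Subtype.val) hc hX u

theorem statement_16_general (l0 l1 l2 : ℝ) (hl1 : 0 < l1) (hl2 : 0 < l2)
    (n p : ℕ) (hp : 0 < p) (X : Matrix (Fin n) (Fin p) ℝ)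
    (B : ℝ → ℝ)
    (hB : ∀ η : ℝ, B η =
      if (2 * Real.sqrt (l0 * l2) + l1) / (2 * l2) < |η| then
        Real.sign η * (|η| - l1 / (2 * l2))
      else 0)
    (η : (Fin n → ℝ) → Fin p → ℝ)
    (hη : ∀ (α : Fin n → ℝ) (j : Fin p), η α j = -(∑ i, X i j * α i) / (2 * l2))
    (αbar : Fin n → ℝ)
    (βbar : Fin p → ℝ)
    (hβbar : ∀ j, βbar j = B (η αbar j))
    (d : Fin p → ℝ)
    (hd : ∀ j, d j =
      if βbar j ≠ 0 then
        (|η αbar j| - (2 * Real.sqrt (l0 * l2) + l1) / (2 * l2)) /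
          Real.sqrt (∑ i, (X i j) ^ 2)
      else
        ((2 * Real.sqrt (l0 * l2) + l1) / (2 * l2) - |η αbar j|) /
          Real.sqrt (∑ i, (X i j) ^ 2))
    (δ : ℝ)
    (hδ : δ = 2 * l2 *
      Finset.univ.inf' (Finset.univ_nonempty_iff.mpr (Fin.pos_iff_nonempty.mp hp)) d)
    -- `opN` is the operator norm of the submatrix `X_S`, `S = {j : βbar j ≠ 0}`:
    -- it is the least constant `c ≥ 0` with `‖X_S v‖ ≤ c‖v‖` for all `v`.
    (opN : ℝ)
    (hopN : IsLeast
      {c : ℝ | 0 ≤ c ∧ ∀ v : {j : Fin p // βbar j ≠ 0} → ℝ,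
        Real.sqrt (∑ i, (∑ j : {j : Fin p // βbar j ≠ 0}, X i j.1 * v j) ^ 2) ≤
          c * Real.sqrt (∑ j : {j : Fin p // βbar j ≠ 0}, (v j) ^ 2)}
      opN) :
    ∀ α : Fin n → ℝ, Real.sqrt (∑ i, (α i - αbar i) ^ 2) < δ →
      Real.sqrt (∑ j, (B (η α j) - βbar j) ^ 2) ≤
        opN / (2 * l2) * Real.sqrt (∑ i, (α i - αbar i) ^ 2) := by
  set c := (2 * Real.sqrt (l0 * l2) + l1) / (2 * l2)
  have hc : 0 ≤ c := by positivity
  have h2l2 : 0 < 2 * l2 := by positivity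
  have hBθ : B = shrinkThreshold c (l1 / (2 * l2)) := funext hB
  intro α hα
  have hν : √(∑ i, (α i - αbar i) ^ 2) = √(∑ i, (αbar i - α i) ^ 2) := by simp_rw [sub_sq_comm]
  rw [hν] at hα ⊢
  have hηsub : ∀ j, η α j - η αbar j = (∑ i, X i j * (αbar i - α i)) / (2 * l2) := fun j => by
    rw [hη, hη, ← sub_div]
    simp only [mul_sub, Finset.sum_sub_distrib]
    ring
  have hgap : ∀ j, |η α j - η αbar j| <
      if βbar j ≠ 0 then |η αbar j| - c else c - |η αbar j| := fun j => by
    have hδj : √(∑ i, (αbar i - α i) ^ 2) < 2 * l2 * d j :=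
      hα.trans_le <| hδ ▸ mul_le_mul_of_nonneg_left (Finset.inf'_le d (Finset.mem_univ j)) h2l2.le
    rw [hd j, ← ite_div] at hδj
    rw [hηsub, abs_div, abs_of_pos h2l2]
    exact abs_sum_mul_div_lt_of_sqrt_sum_sq_lt h2l2 _ _ hδj
  have hstep : ∀ j, B (η α j) - βbar j =
      (if βbar j ≠ 0 then ∑ i, X i j * (αbar i - α i) else 0) / (2 * l2) := fun j => by
    have hgapj := hgap j
    split_ifs at hgapj ⊢ with hj
    · rw [hβbar j, hBθ, shrinkThreshold_sub_of_abs_sub_lt hc hgapj, hηsub]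
    · rw [not_not.1 hj, sub_zero, zero_div, hBθ, shrinkThreshold_eq_zero_of_abs_sub_lt hgapj]
  calc √(∑ j, (B (η α j) - βbar j) ^ 2)
      = √(∑ j, (if βbar j ≠ 0 then ∑ i, X i j * (αbar i - α i) else 0) ^ 2) / (2 * l2) := by
        simp_rw [hstep, div_pow, ← Finset.sum_div]
        rw [Real.sqrt_div' _ (by positivity), Real.sqrt_sq h2l2.le]
    _ ≤ opN * √(∑ i, (αbar i - α i) ^ 2) / (2 * l2) := by
        gcongr
        exact sqrt_sum_sq_ite_transpose_le _ X hopN.1.1 hopN.1.2 _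
    _ = _ := by ring

/-- (Local Lipschitz estimate for the thresholded primal map.)
With β̄_j = 𝔅(η_j(ᾱ)), S = {j : β̄_j ≠ 0}, δ̄ = 2λ₂·min_j d_j, and ‖X_S‖ the
operator norm (largest singular value) of the column submatrix X_S, every α with
‖α − ᾱ‖ < δ̄ satisfies ‖β(α) − β̄‖ ≤ (‖X_S‖/(2λ₂))·‖α − ᾱ‖ where β(α)_j = 𝔅(η_j(α)). -/
theorem statement_16 (l0 l1 l2 : ℝ) (hl0 : 0 < l0) (hl1 : 0 < l1) (hl2 : 0 < l2)
    (n p : ℕ) (hp : 0 < p) (X : Matrix (Fin n) (Fin p) ℝ)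
    (hX : ∀ j : Fin p, ∃ i, X i j ≠ 0)
    (B : ℝ → ℝ)
    (hB : ∀ η : ℝ, B η =
      if (2 * Real.sqrt (l0 * l2) + l1) / (2 * l2) < |η| then
        Real.sign η * (|η| - l1 / (2 * l2))
      else 0)
    (η : (Fin n → ℝ) → Fin p → ℝ)
    (hη : ∀ (α : Fin n → ℝ) (j : Fin p), η α j = -(∑ i, X i j * α i) / (2 * l2))
    (αbar : Fin n → ℝ)
    (hne : ∀ j, |η αbar j| ≠ (2 * Real.sqrt (l0 * l2) + l1) / (2 * l2))
    (βbar : Fin p → ℝ)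
    (hβbar : ∀ j, βbar j = B (η αbar j))
    (d : Fin p → ℝ)
    (hd : ∀ j, d j =
      if βbar j ≠ 0 then
        (|η αbar j| - (2 * Real.sqrt (l0 * l2) + l1) / (2 * l2)) /
          Real.sqrt (∑ i, (X i j) ^ 2)
      else
        ((2 * Real.sqrt (l0 * l2) + l1) / (2 * l2) - |η αbar j|) /
          Real.sqrt (∑ i, (X i j) ^ 2))
    (δ : ℝ)
    (hδ : δ = 2 * l2 *
      Finset.univ.inf' (Finset.univ_nonempty_iff.mpr (Fin.pos_iff_nonempty.mp hp)) d)
    -- `opN` is the operator norm of the submatrix `X_S`, `S = {j : βbar j ≠ 0}`: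
    -- it is the least constant `c ≥ 0` with `‖X_S v‖ ≤ c‖v‖` for all `v`.
    (opN : ℝ)
    (hopN : IsLeast
      {c : ℝ | 0 ≤ c ∧ ∀ v : {j : Fin p // βbar j ≠ 0} → ℝ,
        Real.sqrt (∑ i, (∑ j : {j : Fin p // βbar j ≠ 0}, X i j.1 * v j) ^ 2) ≤
          c * Real.sqrt (∑ j : {j : Fin p // βbar j ≠ 0}, (v j) ^ 2)}
      opN) :
    ∀ α : Fin n → ℝ, Real.sqrt (∑ i, (α i - αbar i) ^ 2) < δ →
      Real.sqrt (∑ j, (B (η α j) - βbar j) ^ 2) ≤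
        opN / (2 * l2) * Real.sqrt (∑ i, (α i - αbar i) ^ 2) :=
  statement_16_general l0 l1 l2 hl1 hl2 n p hp X B hB η hη αbar βbar hβbar d hd δ hδ opN hopN
end

section
/- (Convergence-rate recursion.) Let C ≥ 0 and let h : ℕ → ℝ satisfy h(t) ≥ 0 for all t, h(1)² ≤ C, and h(t)² ≤ (1 − 1/t)·h(t−1)² + C/t² for every integer t ≥ 2. Then for every integer t ≥ 1, h(t)² ≤ C·(1 + ln t)/t. -/
/-! The bound `b t = C (1 + ln t) / t` is a supersolution of the recursion: multiplying it by
`1 - 1/(t+1) = t/(t+1)` gives `C (1 + ln t) / (t+1)`, and the extra `C/(t+1)²` is absorbed by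
`ln (t+1) - ln t ≥ 1/(t+1)`. Induction on `t` then carries `h(t)² ≤ b t` along. -/

open Real

lemma inv_add_one_le_log_add_one_sub_log {x : ℝ} (hx : 0 < x) :
    (x + 1)⁻¹ ≤ log (x + 1) - log x := by
  have h := one_sub_inv_le_log_of_pos (div_pos (by linarith : 0 < x + 1) hx)
  rwa [inv_div, log_div (by linarith) hx.ne', one_sub_div (by linarith), add_sub_cancel_left,
    one_div] at h

lemma one_sub_inv_mul_log_bound_add_le {C x : ℝ} (hC : 0 ≤ C) (hx : 0 < x) :
    (1 - 1 / (x + 1)) * (C * (1 + log x) / x) + C / (x + 1) ^ 2 ≤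
      C * (1 + log (x + 1)) / (x + 1) := by
  have hgap := inv_add_one_le_log_add_one_sub_log hx
  have hcontract : (1 - 1 / (x + 1)) * (C * (1 + log x) / x) = C * (1 + log x) / (x + 1) := by
    field_simp
    ring
  have hsq : C / (x + 1) ^ 2 = C * (x + 1)⁻¹ / (x + 1) := by
    field_simp
  calc (1 - 1 / (x + 1)) * (C * (1 + log x) / x) + C / (x + 1) ^ 2
      = C * (1 + log x) / (x + 1) + C * (x + 1)⁻¹ / (x + 1) := by rw [hcontract, hsq]
    _ ≤ C * (1 + log x) / (x + 1) + C * (log (x + 1) - log x) / (x + 1) := by gcongr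
    _ = C * (1 + log (x + 1)) / (x + 1) := by ring

theorem statement_19_general (C : ℝ) (hC : 0 ≤ C) (h : ℕ → ℝ)
    (hinit : (h 1) ^ 2 ≤ C)
    (hrec : ∀ t : ℕ, 2 ≤ t →
      (h t) ^ 2 ≤ (1 - 1 / (t : ℝ)) * (h (t - 1)) ^ 2 + C / (t : ℝ) ^ 2) :
    ∀ t : ℕ, 1 ≤ t → (h t) ^ 2 ≤ C * (1 + Real.log t) / t := by
  intro t ht
  induction t, ht using Nat.le_induction with
  | base => simpa using hinit
  | succ n hn ih =>
    have hn' : (0 : ℝ) < n := by exact_mod_cast hn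
    have hfactor : (0 : ℝ) ≤ 1 - 1 / ((n : ℝ) + 1) := by
      rw [sub_nonneg, div_le_one (by linarith)]
      linarith
    have hstep := hrec (n + 1) (by omega)
    push_cast at hstep ⊢
    calc h (n + 1) ^ 2 ≤ (1 - 1 / ((n : ℝ) + 1)) * h n ^ 2 + C / ((n : ℝ) + 1) ^ 2 := hstep
      _ ≤ (1 - 1 / ((n : ℝ) + 1)) * (C * (1 + log n) / n) + C / ((n : ℝ) + 1) ^ 2 := by gcongr
      _ ≤ C * (1 + log ((n : ℝ) + 1)) / ((n : ℝ) + 1) :=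
        one_sub_inv_mul_log_bound_add_le hC hn'

/-- (Convergence-rate recursion.) If C ≥ 0, h : ℕ → ℝ is
nonnegative, h(1)² ≤ C, and h(t)² ≤ (1 − 1/t)·h(t−1)² + C/t² for every integer
t ≥ 2, then for every integer t ≥ 1, h(t)² ≤ C·(1 + ln t)/t. -/
theorem statement_19 (C : ℝ) (hC : 0 ≤ C) (h : ℕ → ℝ)
    (hnonneg : ∀ t : ℕ, 0 ≤ h t)
    (hinit : (h 1) ^ 2 ≤ C)
    (hrec : ∀ t : ℕ, 2 ≤ t →
      (h t) ^ 2 ≤ (1 - 1 / (t : ℝ)) * (h (t - 1)) ^ 2 + C / (t : ℝ) ^ 2) :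
    ∀ t : ℕ, 1 ≤ t → (h t) ^ 2 ≤ C * (1 + Real.log t) / t :=
  statement_19_general C hC h hinit hrec
end
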